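/- arXiv:2012.14521 — 6 statements merged into one kernel-verified Lean document; each statement's English description precedes it below -/
import Mathlib

section
/- Let G ~ N(0, I_N) be a standard Gaussian vector in ℝ^N. Then E[‖G‖_2] ≥ √(2N/π). -/
open MeasureTheory ProbabilityTheory Real Set Finset
open scoped NNReal

/-!
Cauchy–Schwarz gives `‖x‖₁ ≤ √N ‖x‖₂` pointwise on `ℝ^N`. Taking expectations, and using that
each coordinate of `G` is a standard Gaussian with `E|g| = √(2/π)`, yields
`N √(2/π) = E‖G‖₁ ≤ √N E‖G‖₂`.
-/

lemma integral_Ioi_mul_exp_neg_mul_sq {b : ℝ} (hb : 0 < b) :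
    ∫ x in Ioi (0 : ℝ), x * exp (-b * x ^ 2) = (2 * b)⁻¹ := by
  have h := integral_rpow_mul_exp_neg_mul_rpow two_pos (by norm_num : (-1 : ℝ) < 1) hb
  norm_num [rpow_neg_one] at h
  simpa [mul_comm] using h

lemma integral_abs_mul_exp_neg_mul_sq {b : ℝ} (hb : 0 < b) :
    ∫ x, |x| * exp (-b * x ^ 2) = b⁻¹ := by
  have h := integral_comp_abs (f := fun x ↦ x * exp (-b * x ^ 2))
  simp only [sq_abs] at h
  rw [h, integral_Ioi_mul_exp_neg_mul_sq hb, mul_inv, ← mul_assoc, mul_inv_cancel₀ two_ne_zero,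
    one_mul]

lemma integral_abs_gaussianReal (v : ℝ≥0) : ∫ x, |x| ∂gaussianReal 0 v = √(2 * v / π) := by
  rcases eq_or_ne v 0 with rfl | hv
  · simp [gaussianReal_zero_var]
  have hv_pos : (0 : ℝ) < v := by positivity
  have hdensity (x : ℝ) : gaussianPDFReal 0 v x • |x|
      = (√(2 * π * v))⁻¹ * (|x| * exp (-(2 * (v : ℝ))⁻¹ * x ^ 2)) := by
    rw [gaussianPDFReal, smul_eq_mul, sub_zero]
    ring_nf
  rw [integral_gaussianReal_eq_integral_smul hv]
  simp only [hdensity]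
  rw [integral_const_mul, integral_abs_mul_exp_neg_mul_sq (by positivity), inv_inv, eq_comm,
    sqrt_eq_iff_mul_self_eq (by positivity) (by positivity), sqrt_mul' _ hv_pos.le]
  field_simp
  rw [sq_sqrt (by positivity), sq_sqrt hv_pos.le]
  ring

lemma sum_abs_div_sqrt_card_le_sqrt_sum_sq {ι : Type*} [Fintype ι] (x : ι → ℝ) :
    (∑ i, |x i|) / √(Fintype.card ι) ≤ √(∑ i, x i ^ 2) := by
  refine div_le_of_le_mul₀ (sqrt_nonneg _) (sqrt_nonneg _) ?_
  simpa [sq_abs] using Real.sum_mul_le_sqrt_mul_sqrt univ (fun i ↦ |x i|) 1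

lemma sqrt_sum_sq_le_sum_abs {ι : Type*} [Fintype ι] (x : ι → ℝ) :
    √(∑ i, x i ^ 2) ≤ ∑ i, |x i| := by
  refine sqrt_le_iff.mpr ⟨sum_nonneg fun i _ ↦ abs_nonneg _, ?_⟩
  simpa [sq_abs] using sum_sq_le_sq_sum_of_nonneg (s := univ) fun i _ ↦ abs_nonneg (x i)

section Product

variable {ι : Type*} [Fintype ι] {μ : Measure ℝ} [IsProbabilityMeasure μ]

lemma integrable_sum_abs_pi (hμ : Integrable id μ) :
    Integrable (fun x : ι → ℝ ↦ ∑ i, |x i|) (Measure.pi fun _ ↦ μ) :=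
  integrable_finsetSum _ fun _ _ ↦ integrable_comp_eval hμ.abs

lemma integrable_sqrt_sum_sq_pi (hμ : Integrable id μ) :
    Integrable (fun x : ι → ℝ ↦ √(∑ i, x i ^ 2)) (Measure.pi fun _ ↦ μ) := by
  refine (integrable_sum_abs_pi hμ).mono' (Continuous.aestronglyMeasurable (by fun_prop))
    (.of_forall fun x ↦ ?_)
  rw [norm_of_nonneg (sqrt_nonneg _)]
  exact sqrt_sum_sq_le_sum_abs x

lemma integral_sum_abs_pi (hμ : Integrable id μ) :
    ∫ x : ι → ℝ, ∑ i, |x i| ∂(Measure.pi fun _ ↦ μ) = Fintype.card ι * ∫ y, |y| ∂μ := by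
  have hmarginal (i : ι) : ∫ x : ι → ℝ, |x i| ∂(Measure.pi fun _ ↦ μ) = ∫ y, |y| ∂μ :=
    integral_comp_eval (μ := fun _ ↦ μ) (f := fun y : ℝ ↦ |y|) continuous_abs.aestronglyMeasurable
  rw [integral_finsetSum _ fun _ _ ↦ integrable_comp_eval hμ.abs]
  simp only [hmarginal, sum_const, card_univ, nsmul_eq_mul]

lemma sqrt_card_mul_integral_abs_le_integral_sqrt_sum_sq (hμ : Integrable id μ) :
    √(Fintype.card ι) * ∫ y, |y| ∂μ ≤ ∫ x : ι → ℝ, √(∑ i, x i ^ 2) ∂(Measure.pi fun _ ↦ μ) :=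
  calc √(Fintype.card ι) * ∫ y, |y| ∂μ
      = (∫ x : ι → ℝ, ∑ i, |x i| ∂(Measure.pi fun _ ↦ μ)) / √(Fintype.card ι) := by
        rw [integral_sum_abs_pi hμ, mul_div_right_comm, div_sqrt]
    _ = ∫ x : ι → ℝ, (∑ i, |x i|) / √(Fintype.card ι) ∂(Measure.pi fun _ ↦ μ) :=
        (integral_div _ _).symm
    _ ≤ ∫ x : ι → ℝ, √(∑ i, x i ^ 2) ∂(Measure.pi fun _ ↦ μ) :=
        integral_mono ((integrable_sum_abs_pi hμ).div_const _) (integrable_sqrt_sum_sq_pi hμ)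
          sum_abs_div_sqrt_card_le_sqrt_sum_sq

end Product

/-- If `G ~ N(0, I_N)` is a standard Gaussian vector in `ℝ^N`, then
`E[‖G‖₂] ≥ √(2N/π)`. -/
theorem expectation_norm_gaussian_ge (N : ℕ) :
    Real.sqrt (2 * N / Real.pi)
      ≤ ∫ x, Real.sqrt (∑ i, x i ^ 2)
          ∂(Measure.pi fun _ : Fin N => gaussianReal 0 1) :=
  calc √(2 * N / π)
      = √(Fintype.card (Fin N)) * ∫ y, |y| ∂gaussianReal 0 1 := by
        rw [integral_abs_gaussianReal, Fintype.card_fin, ← sqrt_mul (Nat.cast_nonneg N)]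
        congr 1
        push_cast
        ring
    _ ≤ _ := sqrt_card_mul_integral_abs_le_integral_sqrt_sum_sq
        ((memLp_id_gaussianReal 1).integrable le_rfl)
end

section
/- For any set T ⊆ ℝ^N, letting w₁ := sup_{ε>0} ε √(log P_ε(T)) and w₂ := sup_{ε>0} ε log P_ε(T) / √N (packing numbers with respect to the Euclidean metric), one has w₂ ≤ (1 + 4e^{-1})√(1 + log 4) · w₁. -/
open MeasureTheory

/-- The `ε`-packing number of `T` under the Euclidean metric: the largest cardinality
of a subset of `T` with pairwise distances `> ε`. -/
noncomputable def packingNumber {N : ℕ} (T : Set (EuclideanSpace ℝ (Fin N))) (ε : ℝ) : ℕ :=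
  sSup {n : ℕ | ∃ A : Finset (EuclideanSpace ℝ (Fin N)),
    ↑A ⊆ T ∧ (A : Set (EuclideanSpace ℝ (Fin N))).Pairwise (fun x y => ε < dist x y) ∧
    A.card = n}

/-!
If `log P_ε(T) ≤ N`, then `ε log P_ε(T) / √N ≤ ε √(log P_ε(T)) ≤ w₁`. Otherwise, every scale
`δ` with `log P_δ(T) > N` satisfies `δ √N ≤ δ √(log P_δ(T)) ≤ w₁`, so any `ε'` slightly above
`w₁ / √N` has `log P_ε'(T) ≤ N`. A maximal `ε'`-packing covers `T` by `ε'`-balls, and comparing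
volumes, each such ball contains at most `(1 + 2ε'/ε)^N ≤ (3ε'/ε)^N` points that are
`ε`-separated. Hence `ε log P_ε(T) ≤ N (ε + ε log (3ε'/ε)) ≤ N ε' (1 + 3/e)`, using
`sup_ε ε log (a/ε) = a/e`, and the choice of `ε'` makes the right-hand side `(1 + 4/e) √N w₁`.
-/

open Module Real
open Metric hiding packingNumber
open scoped ENNReal

theorem card_le_of_separated_subset_closedBall {E : Type*} [NormedAddCommGroup E]
    [NormedSpace ℝ E] [FiniteDimensional ℝ E] {s : Finset E} {x : E} {R ε : ℝ}
    (hε : 0 < ε) (hR : 0 ≤ R) (hs : ↑s ⊆ closedBall x R)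
    (hsep : (s : Set E).Pairwise fun a b => ε < dist a b) :
    (s.card : ℝ) ≤ (1 + 2 * R / ε) ^ finrank ℝ E := by
  borelize E
  let μ : Measure E := Measure.addHaar
  have hdisj : (s : Set E).PairwiseDisjoint fun a => ball a (ε / 2) :=
    fun a ha b hb hab => ball_disjoint_ball (by linarith [hsep ha hb hab])
  have hsub : ⋃ a ∈ s, ball a (ε / 2) ⊆ ball x (R + ε / 2) :=
    Set.iUnion₂_subset fun a ha => ball_subset_ball' (by linarith [mem_closedBall.1 (hs ha)])
  have hvol : (s.card : ℝ≥0∞) * ENNReal.ofReal ((ε / 2) ^ finrank ℝ E) * μ (ball 0 1) ≤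
      ENNReal.ofReal ((R + ε / 2) ^ finrank ℝ E) * μ (ball 0 1) :=
    calc (s.card : ℝ≥0∞) * ENNReal.ofReal ((ε / 2) ^ finrank ℝ E) * μ (ball 0 1)
        = μ (⋃ a ∈ s, ball a (ε / 2)) := by
          rw [measure_biUnion_finset hdisj fun a _ => measurableSet_ball]
          simp only [μ.addHaar_ball_of_pos _ (half_pos hε), Finset.sum_const, nsmul_eq_mul,
            mul_assoc]
      _ ≤ μ (ball x (R + ε / 2)) := measure_mono hsub
      _ = ENNReal.ofReal ((R + ε / 2) ^ finrank ℝ E) * μ (ball 0 1) :=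
          μ.addHaar_ball_of_pos _ (by positivity)
  have hvol' := (ENNReal.mul_le_mul_iff_left (measure_ball_pos μ 0 one_pos).ne'
    measure_ball_lt_top.ne).1 hvol
  rw [← ENNReal.ofReal_natCast, ← ENNReal.ofReal_mul (by positivity),
    ENNReal.ofReal_le_ofReal_iff (by positivity)] at hvol'
  calc (s.card : ℝ) ≤ (R + ε / 2) ^ finrank ℝ E / (ε / 2) ^ finrank ℝ E := by
        rwa [le_div_iff₀ (by positivity)]
    _ = (1 + 2 * R / ε) ^ finrank ℝ E := by
        rw [← div_pow]; congr 1; field_simp; ring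

theorem mul_log_div_le_mul_exp_neg_one {a b : ℝ} (ha : 0 < a) (hb : 0 < b) :
    a * log (b / a) ≤ b * exp (-1) := by
  have h := log_le_sub_one_of_pos (by positivity : 0 < b / a * exp (-1))
  rw [log_mul (by positivity) (exp_pos _).ne', log_exp] at h
  calc a * log (b / a) ≤ a * (b / a * exp (-1)) := by gcongr; linarith
    _ = b * exp (-1) := by field_simp

theorem div_sqrt_le_sqrt {x y : ℝ} (hx : 0 ≤ x) (hxy : x ≤ y) : x / √y ≤ √x := by
  rcases hx.eq_or_lt with rfl | hx
  · simp
  calc x / √y ≤ x / √x := div_le_div_of_nonneg_left hx.le (sqrt_pos.2 hx) (sqrt_le_sqrt hxy)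
    _ = √x := div_sqrt

theorem sqrt_log_natCast_le (n : ℕ) : √(log n) ≤ log n / √(log 2) := by
  rcases Nat.lt_or_ge n 2 with hn | hn
  · interval_cases n <;> simp
  have hlog2 : 0 < log 2 := log_pos one_lt_two
  have hlog : log 2 ≤ log n := log_le_log two_pos (by exact_mod_cast hn)
  calc √(log n) = log n / √(log n) := div_sqrt.symm
    _ ≤ log n / √(log 2) :=
        div_le_div_of_nonneg_left (hlog2.le.trans hlog) (sqrt_pos.2 hlog2) (sqrt_le_sqrt hlog)

section Packing

variable {N : ℕ} {T : Set (EuclideanSpace ℝ (Fin N))} {ε ε' : ℝ}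

def packingCards (T : Set (EuclideanSpace ℝ (Fin N))) (ε : ℝ) : Set ℕ :=
  {n : ℕ | ∃ A : Finset (EuclideanSpace ℝ (Fin N)),
    ↑A ⊆ T ∧ (A : Set (EuclideanSpace ℝ (Fin N))).Pairwise (fun x y => ε < dist x y) ∧
    A.card = n}

theorem packingNumber_eq_sSup_packingCards : packingNumber T ε = sSup (packingCards T ε) := rfl

theorem packingCards_anti (h : ε ≤ ε') : packingCards T ε' ⊆ packingCards T ε := by
  rintro _ ⟨A, hAT, hsep, hcard⟩
  exact ⟨A, hAT, hsep.mono' fun _ _ => h.trans_lt, hcard⟩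

theorem packingNumber_eq_zero_of_not_bddAbove (h : ¬BddAbove (packingCards T ε)) :
    packingNumber T ε = 0 :=
  Nat.sSup_of_not_bddAbove h

theorem exists_packing_card_eq_packingNumber (h : BddAbove (packingCards T ε)) :
    ∃ A : Finset (EuclideanSpace ℝ (Fin N)), ↑A ⊆ T ∧
      (A : Set (EuclideanSpace ℝ (Fin N))).Pairwise (fun x y => ε < dist x y) ∧
      A.card = packingNumber T ε :=
  Nat.sSup_mem (s := packingCards T ε) ⟨0, ∅, by simp, by simp, rfl⟩ h

theorem exists_dist_le_of_card_eq_packingNumber (hε : 0 ≤ ε) (h : BddAbove (packingCards T ε))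
    {A : Finset (EuclideanSpace ℝ (Fin N))} (hAT : ↑A ⊆ T)
    (hsep : (A : Set (EuclideanSpace ℝ (Fin N))).Pairwise (fun x y => ε < dist x y))
    (hcard : A.card = packingNumber T ε) {t : EuclideanSpace ℝ (Fin N)} (ht : t ∈ T) :
    ∃ a ∈ A, dist t a ≤ ε := by
  classical
  by_contra! hfar
  have htA : t ∉ A := fun htA => by simpa using (hfar t htA).trans_le' hε
  have hinsert : (insert t A).card ∈ packingCards T ε := by
    refine ⟨insert t A, by simpa using Set.insert_subset ht hAT, ?_, rfl⟩
    rw [Finset.coe_insert, Set.pairwise_insert]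
    exact ⟨hsep, fun a ha _ => ⟨hfar a ha, dist_comm t a ▸ hfar a ha⟩⟩
  have := le_csSup h hinsert
  rw [Finset.card_insert_of_notMem htA, ← packingNumber_eq_sSup_packingCards] at this
  omega

theorem packingNumber_le_mul_packingNumber (hε : 0 < ε) (hεε' : ε ≤ ε') :
    (packingNumber T ε : ℝ) ≤ packingNumber T ε' * (1 + 2 * ε' / ε) ^ N := by
  have hε' : 0 < ε' := hε.trans_le hεε'
  by_cases hb : BddAbove (packingCards T ε)
  swap
  · rw [packingNumber_eq_zero_of_not_bddAbove hb, Nat.cast_zero]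
    positivity
  classical
  obtain ⟨A, hAT, hAsep, hAcard⟩ := exists_packing_card_eq_packingNumber hb
  have hb' := hb.mono (packingCards_anti hεε')
  obtain ⟨A', hA'T, hA'sep, hA'card⟩ := exists_packing_card_eq_packingNumber hb'
  have hcover : ∀ a ∈ A, ∃ b ∈ A', dist a b ≤ ε' := fun a ha =>
    exists_dist_le_of_card_eq_packingNumber hε'.le hb' hA'T hA'sep hA'card (hAT ha)
  choose! φ hφA' hφdist using hcover
  have hfiber : ∀ b ∈ A', (({a ∈ A | φ a = b}).card : ℝ) ≤ (1 + 2 * ε' / ε) ^ N := by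
    intro b _
    have hsub : ↑({a ∈ A | φ a = b}) ⊆ closedBall b ε' := fun a ha => by
      obtain ⟨haA, rfl⟩ := Finset.mem_filter.1 ha
      exact hφdist a haA
    simpa only [finrank_euclideanSpace_fin] using
      card_le_of_separated_subset_closedBall hε hε'.le hsub
        (hAsep.mono (Finset.coe_subset.2 (Finset.filter_subset _ _)))
  calc (packingNumber T ε : ℝ) = ∑ b ∈ A', (({a ∈ A | φ a = b}).card : ℝ) := by
        rw [← hAcard, Finset.card_eq_sum_card_fiberwise hφA', Nat.cast_sum]
    _ ≤ ∑ b ∈ A', (1 + 2 * ε' / ε) ^ N := Finset.sum_le_sum hfiber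
    _ = packingNumber T ε' * (1 + 2 * ε' / ε) ^ N := by
        rw [Finset.sum_const, nsmul_eq_mul, hA'card]

theorem log_packingNumber_le (hε : 0 < ε) (hεε' : ε ≤ ε') :
    log (packingNumber T ε) ≤ log (packingNumber T ε') + N * log (1 + 2 * ε' / ε) := by
  have hε' : 0 < ε' := hε.trans_le hεε'
  have hratio : 1 ≤ 1 + 2 * ε' / ε := le_add_of_nonneg_right (by positivity)
  rcases Nat.eq_zero_or_pos (packingNumber T ε) with h | h
  · rw [h, Nat.cast_zero, log_zero]
    exact add_nonneg (log_natCast_nonneg _) (mul_nonneg N.cast_nonneg (log_nonneg hratio))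
  have hcomp := packingNumber_le_mul_packingNumber (T := T) hε hεε'
  have hP' : (packingNumber T ε' : ℝ) ≠ 0 := by
    rintro h'; rw [h', zero_mul] at hcomp; exact (Nat.cast_pos.2 h).not_ge hcomp
  calc log (packingNumber T ε) ≤ log (packingNumber T ε' * (1 + 2 * ε' / ε) ^ N) :=
        log_le_log (Nat.cast_pos.2 h) hcomp
    _ = log (packingNumber T ε') + N * log (1 + 2 * ε' / ε) := by
        rw [log_mul hP' (pow_ne_zero _ (zero_lt_one.trans_le hratio).ne'), log_pow]

end Packing

theorem mul_log_packingNumber_div_sqrt_le_of_lt_log {N : ℕ} (hN : 0 < N)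
    {T : Set (EuclideanSpace ℝ (Fin N))} {ε w : ℝ} (hε : 0 < ε)
    (hw : ∀ δ > 0, δ * √(log (packingNumber T δ)) ≤ w) (hlarge : N < log (packingNumber T ε)) :
    ε * log (packingNumber T ε) / √N ≤ (1 + 4 * exp (-1)) * w := by
  have hexp := exp_pos (-1)
  have hsqrtN : 0 < √N := sqrt_pos.2 (Nat.cast_pos.2 hN)
  have hscale : ∀ δ > 0, N < log (packingNumber T δ) → δ ≤ w / √N := by
    intro δ hδ hδlarge
    rw [le_div_iff₀ hsqrtN]
    exact (mul_le_mul_of_nonneg_left (sqrt_le_sqrt hδlarge.le) hδ.le).trans (hw δ hδ)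
  have hεw : ε ≤ w / √N := hscale ε hε hlarge
  -- `ε'` lies just above the largest scale `w / √N` at which `log P > N`; the ratio is chosen
  -- so that `ε' * (1 + 3 * exp (-1)) = (1 + 4 * exp (-1)) * (w / √N)`.
  set ε' := (1 + 4 * exp (-1)) / (1 + 3 * exp (-1)) * (w / √N) with hε'
  have hwε' : w / √N < ε' :=
    lt_mul_of_one_lt_left (hε.trans_le hεw) <| by rw [one_lt_div (by positivity)]; linarith
  have hεε' : ε ≤ ε' := hεw.trans hwε'.le
  have hε'pos : 0 < ε' := hε.trans_le hεε'
  have hε'small : log (packingNumber T ε') ≤ N :=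
    not_lt.1 fun hε'large => (hscale ε' hε'pos hε'large).not_gt hwε'
  have hratio : 1 + 2 * ε' / ε ≤ 3 * ε' / ε := by
    calc 1 + 2 * ε' / ε ≤ ε' / ε + 2 * ε' / ε := by gcongr; exact (one_le_div hε).2 hεε'
      _ = 3 * ε' / ε := by ring
  have hlogP : log (packingNumber T ε) ≤ N * (1 + log (3 * ε' / ε)) :=
    calc log (packingNumber T ε) ≤ log (packingNumber T ε') + N * log (1 + 2 * ε' / ε) :=
          log_packingNumber_le hε hεε'
      _ ≤ N * (1 + log (3 * ε' / ε)) := by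
          rw [mul_add, mul_one]
          gcongr
  calc ε * log (packingNumber T ε) / √N ≤ ε * (N * (1 + log (3 * ε' / ε))) / √N := by gcongr
    _ = √N * (ε + ε * log (3 * ε' / ε)) := by
        rw [div_eq_iff hsqrtN.ne']
        linear_combination (-(ε * (1 + log (3 * ε' / ε)))) * mul_self_sqrt (Nat.cast_nonneg N)
    _ ≤ √N * (ε' + 3 * ε' * exp (-1)) := by
        gcongr √N * ?_
        exact add_le_add hεε' (mul_log_div_le_mul_exp_neg_one hε (by positivity))
    _ = (1 + 4 * exp (-1)) * w := by
        rw [hε']; field_simp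

theorem mul_log_packingNumber_div_sqrt_le {N : ℕ} (hN : 0 < N)
    {T : Set (EuclideanSpace ℝ (Fin N))} {ε w : ℝ} (hε : 0 < ε)
    (hw : ∀ δ > 0, δ * √(log (packingNumber T δ)) ≤ w) :
    ε * log (packingNumber T ε) / √N ≤ (1 + 4 * exp (-1)) * w := by
  have hw_nonneg : 0 ≤ w := (mul_nonneg hε.le (sqrt_nonneg _)).trans (hw ε hε)
  by_cases hsmall : log (packingNumber T ε) ≤ N
  · calc ε * log (packingNumber T ε) / √N = ε * (log (packingNumber T ε) / √N) :=
          mul_div_assoc _ _ _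
      _ ≤ ε * √(log (packingNumber T ε)) := by
          gcongr; exact div_sqrt_le_sqrt (log_natCast_nonneg _) hsmall
      _ ≤ w := hw ε hε
      _ ≤ (1 + 4 * exp (-1)) * w := le_mul_of_one_le_left hw_nonneg (by linarith [exp_pos (-1)])
  exact mul_log_packingNumber_div_sqrt_le_of_lt_log hN hε hw (not_le.1 hsmall)

theorem bddAbove_range_mul_sqrt_log_packingNumber {N : ℕ} (hN : 0 < N)
    {T : Set (EuclideanSpace ℝ (Fin N))}
    (h : BddAbove (Set.range fun ε : {ε : ℝ // 0 < ε} => ε * log (packingNumber T ε) / √N)) :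
    BddAbove (Set.range fun ε : {ε : ℝ // 0 < ε} => ε * √(log (packingNumber T ε))) := by
  obtain ⟨M, hM⟩ := h
  refine ⟨√N / √(log 2) * M, ?_⟩
  rintro _ ⟨ε, rfl⟩
  calc (ε : ℝ) * √(log (packingNumber T ε))
      ≤ ε * (log (packingNumber T ε) / √(log 2)) :=
        mul_le_mul_of_nonneg_left (sqrt_log_natCast_le _) ε.2.le
    _ = √N / √(log 2) * (ε * log (packingNumber T ε) / √N) := by
        have : 0 < √N := sqrt_pos.2 (Nat.cast_pos.2 hN)
        field_simp
    _ ≤ √N / √(log 2) * M := by gcongr; exact hM ⟨ε, rfl⟩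

theorem dimensional_sudakov_functionals_comparison_general
    (N : ℕ) (T : Set (EuclideanSpace ℝ (Fin N)))
    (w₁ w₂ : ℝ)
    (hw₁ : w₁ = ⨆ ε : {ε : ℝ // 0 < ε},
      (ε : ℝ) * Real.sqrt (Real.log (packingNumber T ε)))
    (hw₂ : w₂ = ⨆ ε : {ε : ℝ // 0 < ε},
      (ε : ℝ) * Real.log (packingNumber T ε) / Real.sqrt N) :
    w₂ ≤ (1 + 4 * Real.exp (-1)) * Real.sqrt (1 + Real.log 4) * w₁ := by
  have hw₁_nonneg : 0 ≤ w₁ := hw₁ ▸ iSup_nonneg fun ε => mul_nonneg ε.2.le (sqrt_nonneg _)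
  rcases Nat.eq_zero_or_pos N with rfl | hN
  · simp only [hw₂, CharP.cast_eq_zero, sqrt_zero, div_zero, ciSup_const]
    positivity
  have hconst : 1 + 4 * exp (-1) ≤ (1 + 4 * exp (-1)) * √(1 + log 4) :=
    le_mul_of_one_le_right (by positivity)
      (one_le_sqrt.2 (le_add_of_nonneg_right (log_nonneg (by norm_num))))
  by_cases hF : BddAbove (Set.range fun ε : {ε : ℝ // 0 < ε} =>
      ε * √(log (packingNumber T ε)))
  · rw [hw₂]
    refine Real.iSup_le (fun ε => ?_) (by positivity)
    calc (ε : ℝ) * log (packingNumber T ε) / √N ≤ (1 + 4 * exp (-1)) * w₁ :=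
          mul_log_packingNumber_div_sqrt_le hN ε.2 fun δ hδ => hw₁ ▸ le_ciSup hF ⟨δ, hδ⟩
      _ ≤ _ := mul_le_mul_of_nonneg_right hconst hw₁_nonneg
  -- Both suprema then take the junk value `0`.
  have hG := mt (bddAbove_range_mul_sqrt_log_packingNumber hN) hF
  rw [hw₁, hw₂, Real.iSup_of_not_bddAbove hF, Real.iSup_of_not_bddAbove hG, mul_zero]

/-- For `T ⊆ ℝ^N`, with `w₁ := sup_{ε>0} ε √(log P_ε(T))` and
`w₂ := sup_{ε>0} ε log P_ε(T) / √N`, one has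
`w₂ ≤ (1 + 4e⁻¹) √(1 + log 4) · w₁`. -/
theorem dimensional_sudakov_functionals_comparison
    (N : ℕ) (hN : 0 < N) (T : Set (EuclideanSpace ℝ (Fin N)))
    (w₁ w₂ : ℝ)
    (hw₁ : w₁ = ⨆ ε : {ε : ℝ // 0 < ε},
      (ε : ℝ) * Real.sqrt (Real.log (packingNumber T ε)))
    (hw₂ : w₂ = ⨆ ε : {ε : ℝ // 0 < ε},
      (ε : ℝ) * Real.log (packingNumber T ε) / Real.sqrt N) :
    w₂ ≤ (1 + 4 * Real.exp (-1)) * Real.sqrt (1 + Real.log 4) * w₁ :=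
  dimensional_sudakov_functionals_comparison_general N T w₁ w₂ hw₁ hw₂
end

section
/- Let A ⊆ ℝ^N be compact, ε > 0, and let r(A) := E[sup_{t∈A} |Σ_{i=1}^N ε_i t_i|] be the Rademacher complexity (ε_i i.i.d. uniform on {−1,1}). Then r(A) ≥ (ε/2)(N(A, ε B₁)^{1/N} − 1) ≥ (ε/(2N)) log N(A, ε B₁), where N(A, ε B₁) is the covering number of A by translates of the ε-dilated ℓ₁ unit ball. -/
open Pointwise

/-- The covering number `N(A, B)`: the minimum number of translates of `B` whose union
contains `A`. -/
noncomputable def coveringNumber {E : Type*} [AddCommGroup E]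
    (A B : Set E) : ℕ :=
  sInf {n : ℕ | ∃ S : Finset E, S.card = n ∧ A ⊆ ↑S + B}

/-- The Rademacher complexity `r(A) = E[sup_{t∈A} |Σᵢ εᵢ tᵢ|]` with `εᵢ` i.i.d.
uniform on `{-1, 1}`. -/
noncomputable def rademacherComplexity (N : ℕ) (A : Set (Fin N → ℝ)) : ℝ :=
  (∑ σ : Fin N → Bool,
    sSup ((fun t => |∑ i, (if σ i then (1 : ℝ) else -1) * t i|) '' A)) / 2 ^ N

open MeasureTheory Finset Matrix
open scoped BigOperators

/-!
For `σ ∈ {±1}ᴺ` put `h σ = sup_{t ∈ A} |⟨σ, t⟩|`, so that `r(A)` is the mean of `h`. The key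
volumetric fact is that a polytope `K(c) = {x | ⟨σ, x⟩ ≤ c σ for all σ}` has at most the volume
of `K` of the constant function equal to the mean of `c`, which is an `ℓ₁`-ball; this follows by
induction on the dimension, slicing along the first coordinate. If `S ⊆ A` is `ε`-separated in
`ℓ₁`, the balls `s + (ε/2) B₁` are disjoint and lie in `K(h + ε/2)`, so that
`|S| (ε/2)^N ≤ (r(A) + ε/2)^N`. A maximal separated set is an `ε`-net, which gives
`N(A, εB₁)^{1/N} ≤ 1 + 2 r(A)/ε`; the logarithmic form follows from `log y ≤ y - 1`.
-/

theorem volume_eq_lintegral_volume_vecCons_preimage {α : Type*} [MeasureSpace α]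
    [SigmaFinite (volume : Measure α)] {n : ℕ} {s : Set (Fin (n + 1) → α)} (hs : MeasurableSet s) :
    volume s = ∫⁻ t, volume (vecCons t ⁻¹' s) := by
  have e := (volume_preserving_piFinSuccAbove (fun _ : Fin (n + 1) => α) 0).symm
  rw [← e.measure_preimage hs.nullMeasurableSet, Measure.volume_eq_prod,
    Measure.prod_apply (hs.preimage e.measurable)]
  congr! with t
  ext y
  simp [Fin.insertNthEquiv, Fin.insertNth_zero', vecCons]

section SignPolytope

variable {n : ℕ}

def signVec (σ : Fin n → Bool) : Fin n → ℝ := fun i => if σ i then 1 else -1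

def signPolytope (c : (Fin n → Bool) → ℝ) : Set (Fin n → ℝ) :=
  {x | ∀ σ, signVec σ ⬝ᵥ x ≤ c σ}

theorem signVec_cons (b : Bool) (σ : Fin n → Bool) :
    signVec (vecCons b σ) = vecCons (if b then 1 else -1) (signVec σ) := by
  ext i
  cases i using Fin.cases <;> rfl

theorem signVec_dotProduct_le (σ : Fin n → Bool) (x : Fin n → ℝ) :
    signVec σ ⬝ᵥ x ≤ ∑ i, |x i| := by
  refine Finset.sum_le_sum fun i _ => ?_
  unfold signVec
  split_ifs
  · simpa using le_abs_self (x i)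
  · simpa using neg_le_abs (x i)

theorem signVec_dotProduct_eq_sum_abs (x : Fin n → ℝ) :
    signVec (fun i => decide (0 ≤ x i)) ⬝ᵥ x = ∑ i, |x i| := by
  refine Finset.sum_congr rfl fun i _ => ?_
  by_cases hx : 0 ≤ x i
  · simp [signVec, hx, abs_of_nonneg hx]
  · simp [signVec, hx, abs_of_neg (not_le.mp hx)]

theorem signPolytope_const (r : ℝ) :
    signPolytope (fun _ : Fin n → Bool => r) = {x | ∑ i, |x i| ≤ r} := by
  ext x
  refine ⟨fun hx => ?_, fun hx σ => (signVec_dotProduct_le σ x).trans hx⟩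
  exact (signVec_dotProduct_eq_sum_abs x).symm.trans_le (hx _)

theorem signPolytope_mono : Monotone (signPolytope (n := n)) :=
  fun _ _ hc _ hx σ => (hx σ).trans (hc σ)

theorem isClosed_signPolytope (c : (Fin n → Bool) → ℝ) : IsClosed (signPolytope c) := by
  simp only [signPolytope, Set.ofPred_forall]
  exact isClosed_iInter fun σ =>
    isClosed_le (continuous_const.dotProduct continuous_id) continuous_const

theorem signPolytope_const_eq_smul {r : ℝ} (hr : 0 < r) :
    signPolytope (fun _ : Fin n → Bool => r) = r • signPolytope (fun _ : Fin n → Bool => 1) := by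
  ext x
  simp only [Set.mem_smul_set_iff_inv_smul_mem₀ hr.ne', signPolytope, Set.mem_ofPred_eq,
    dotProduct_smul, smul_eq_mul, inv_mul_le_iff₀ hr, mul_one]

theorem vecCons_preimage_signPolytope (c : (Fin (n + 1) → Bool) → ℝ) (t : ℝ) :
    vecCons t ⁻¹' signPolytope c =
      signPolytope fun σ => min (c (vecCons true σ) - t) (c (vecCons false σ) + t) := by
  ext y
  simp only [Set.mem_preimage, signPolytope, Set.mem_ofPred_eq, le_min_iff]
  constructor
  · intro h σ
    have hT := h (vecCons true σ)
    have hF := h (vecCons false σ)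
    simp only [signVec_cons, cons_dotProduct_cons, ↓reduceIte, Bool.false_eq_true, one_mul,
      neg_mul] at hT hF
    constructor <;> linarith
  · intro h σ
    rw [← cons_head_tail σ]
    have := h (vecTail σ)
    cases vecHead σ <;>
      simp only [signVec_cons, cons_dotProduct_cons, ↓reduceIte, Bool.false_eq_true, one_mul,
        neg_mul] <;>
      linarith [this.1, this.2]

theorem vecCons_preimage_signPolytope_const (a t : ℝ) :
    vecCons t ⁻¹' signPolytope (fun _ : Fin (n + 1) → Bool => a) =
      signPolytope fun _ => a - |t| := by
  rw [vecCons_preimage_signPolytope, abs_eq_max_neg, ← min_sub_sub_left, sub_neg_eq_add]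

theorem expect_vecCons (c : (Fin (n + 1) → Bool) → ℝ) :
    𝔼 σ, c σ = (𝔼 σ, c (vecCons true σ) + 𝔼 σ, c (vecCons false σ)) / 2 := by
  rw [← Fintype.expect_equiv (Fin.consEquiv fun _ => Bool) (fun p => c (Fin.cons p.1 p.2)) c
    (fun _ => rfl), ← univ_product_univ,
    Finset.expect_product' univ univ fun b σ => c (Fin.cons b σ),
    Fintype.expect_eq_sum_div_card, Fintype.sum_bool]
  simp [vecCons]

theorem volume_signPolytope_const {r : ℝ} (hr : 0 < r) :
    volume (signPolytope fun _ : Fin n → Bool => r) =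
      ENNReal.ofReal (r ^ n) * volume (signPolytope fun _ : Fin n → Bool => 1) := by
  rw [signPolytope_const_eq_smul hr, Measure.addHaar_smul_of_nonneg _ hr.le,
    Module.finrank_fin_fun]

theorem volume_signPolytope_one_pos : 0 < volume (signPolytope fun _ : Fin n → Bool => 1) := by
  have hopen : IsOpen {x : Fin n → ℝ | ∑ i, |x i| < 1} :=
    isOpen_lt (continuous_finsetSum _ fun i _ => (continuous_apply i).abs) continuous_const
  refine (hopen.measure_pos volume ⟨0, by simp⟩).trans_le (measure_mono ?_)
  rw [signPolytope_const]
  exact Set.ofPred_subset_ofPred.mpr fun x => le_of_lt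

theorem volume_signPolytope_one_lt_top : volume (signPolytope fun _ : Fin n → Bool => 1) < ⊤ := by
  refine (measure_mono fun x hx => ?_).trans_lt (measure_closedBall_lt_top (x := 0) (r := 1))
  rw [signPolytope_const] at hx
  rw [mem_closedBall_zero_iff, pi_norm_le_iff_of_nonneg zero_le_one]
  exact fun i => (Real.norm_eq_abs _).trans_le
    ((Finset.single_le_sum (fun j _ => abs_nonneg (x j)) (mem_univ i)).trans hx)

end SignPolytope

theorem volume_signPolytope_le_const_expect :
    ∀ {n : ℕ} (c : (Fin n → Bool) → ℝ),
      volume (signPolytope c) ≤ volume (signPolytope fun _ : Fin n → Bool => 𝔼 σ, c σ)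
  | 0, c => by
    have hc : c = fun _ => c default := funext fun σ => congrArg c (Subsingleton.elim σ _)
    rw [hc, Fintype.expect_const]
  | n + 1, c => by
    set aT := 𝔼 σ, c (vecCons true σ)
    set aF := 𝔼 σ, c (vecCons false σ)
    set E := 𝔼 σ, c σ
    have hE : E = (aT + aF) / 2 := expect_vecCons c
    -- each slice is dominated by a slice of the ℓ₁-ball of radius `E`, shifted by `m`
    set m := (aT - aF) / 2 with hm
    have hslice : ∀ t, volume (vecCons t ⁻¹' signPolytope c) ≤
        volume (vecCons (t - m) ⁻¹' signPolytope fun _ : Fin (n + 1) → Bool => E) := by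
      intro t
      rw [vecCons_preimage_signPolytope, vecCons_preimage_signPolytope_const]
      refine (volume_signPolytope_le_const_expect _).trans
        (measure_mono (signPolytope_mono (n := n) fun _ => ?_))
      have hT : 𝔼 σ, min (c (vecCons true σ) - t) (c (vecCons false σ) + t) ≤ aT - t :=
        (expect_le_expect fun σ _ => min_le_left _ _).trans_eq
          (by rw [expect_sub_distrib, Fintype.expect_const])
      have hF : 𝔼 σ, min (c (vecCons true σ) - t) (c (vecCons false σ) + t) ≤ aF + t :=
        (expect_le_expect fun σ _ => min_le_right _ _).trans_eq
          (by rw [expect_add_distrib, Fintype.expect_const])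
      cases abs_cases (t - m) <;> linarith
    have hmeas (c' : (Fin (n + 1) → Bool) → ℝ) := (isClosed_signPolytope c').measurableSet
    calc volume (signPolytope c)
        = ∫⁻ t, volume (vecCons t ⁻¹' signPolytope c) :=
          volume_eq_lintegral_volume_vecCons_preimage (hmeas c)
      _ ≤ ∫⁻ t, volume (vecCons (t - m) ⁻¹' signPolytope fun _ => E) := lintegral_mono hslice
      _ = ∫⁻ t, volume (vecCons t ⁻¹' signPolytope fun _ => E) :=
          lintegral_sub_right_eq_self (fun s => volume (vecCons s ⁻¹' signPolytope fun _ => E)) m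
      _ = volume (signPolytope fun _ => E) :=
          (volume_eq_lintegral_volume_vecCons_preimage (hmeas _)).symm

theorem rademacherComplexity_eq_expect (n : ℕ) (A : Set (Fin n → ℝ)) :
    rademacherComplexity n A = 𝔼 σ, sSup ((fun t => |signVec σ ⬝ᵥ t|) '' A) := by
  rw [Fintype.expect_eq_sum_div_card, Fintype.card_fun, Fintype.card_bool, Fintype.card_fin,
    Nat.cast_pow, Nat.cast_ofNat]
  rfl

theorem rademacherComplexity_nonneg (n : ℕ) (A : Set (Fin n → ℝ)) :
    0 ≤ rademacherComplexity n A := by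
  rw [rademacherComplexity_eq_expect]
  exact expect_nonneg fun σ _ => Real.sSup_nonneg (by rintro _ ⟨t, -, rfl⟩; exact abs_nonneg _)

section Packing

variable {n : ℕ} {A : Set (Fin n → ℝ)} {r : ℝ} {S : Finset (Fin n → ℝ)}

/-- The translates `x + r B₁`, `x ∈ S`, are disjoint and lie in `signPolytope (h + r)`, where
`h σ = sup_{t ∈ A} |⟨σ, t⟩|` has mean `rademacherComplexity n A`. -/
theorem card_mul_volume_signPolytope_le (hA : IsCompact A) (hSA : ↑S ⊆ A)
    (hS : (S : Set (Fin n → ℝ)).Pairwise fun x y => 2 * r < ∑ i, |x i - y i|) :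
    S.card * volume (signPolytope fun _ : Fin n → Bool => r) ≤
      volume (signPolytope fun _ : Fin n → Bool => rademacherComplexity n A + r) := by
  set B := signPolytope fun _ : Fin n → Bool => r with hB_def
  set h : (Fin n → Bool) → ℝ := fun σ => sSup ((fun t => |signVec σ ⬝ᵥ t|) '' A)
  have hsub : ∀ x ∈ S, x +ᵥ B ⊆ signPolytope fun σ => h σ + r := by
    rintro x hx _ ⟨b, hb, rfl⟩ σ
    show signVec σ ⬝ᵥ (x + b) ≤ h σ + r
    rw [dotProduct_add]
    have hbdd : BddAbove ((fun t => |signVec σ ⬝ᵥ t|) '' A) :=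
      hA.bddAbove_image (continuous_const.dotProduct continuous_id).abs.continuousOn
    exact add_le_add ((le_abs_self _).trans (le_csSup hbdd ⟨x, hSA hx, rfl⟩)) (hb σ)
  have hdisj : (S : Set (Fin n → ℝ)).PairwiseDisjoint (· +ᵥ B) := by
    refine fun x hx y hy hxy => Set.disjoint_left.mpr ?_
    rintro _ ⟨b, hb, rfl⟩ ⟨b', hb', hbb'⟩
    rw [hB_def, signPolytope_const] at hb hb'
    refine (hS hx hy hxy).not_ge ?_
    calc ∑ i, |x i - y i| = ∑ i, |b' i - b i| := by
          refine Finset.sum_congr rfl fun i _ => congrArg abs ?_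
          have := congrFun hbb' i
          simp only [vadd_eq_add, Pi.add_apply] at this
          linarith
      _ ≤ ∑ i, (|b' i| + |b i|) := Finset.sum_le_sum fun i _ => abs_sub _ _
      _ ≤ 2 * r := by
          rw [Finset.sum_add_distrib]
          linarith [Set.mem_ofPred.mp hb, Set.mem_ofPred.mp hb']
  have hB : MeasurableSet B := (isClosed_signPolytope _).measurableSet
  calc S.card * volume B = ∑ x ∈ S, volume (x +ᵥ B) := by simp [measure_vadd]
    _ = volume (⋃ x ∈ S, x +ᵥ B) := (measure_biUnion_finset hdisj fun x _ => hB.const_vadd x).symm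
    _ ≤ volume (signPolytope fun σ => h σ + r) := measure_mono (Set.iUnion₂_subset hsub)
    _ ≤ volume (signPolytope fun _ : Fin n → Bool => 𝔼 σ, (h σ + r)) :=
          volume_signPolytope_le_const_expect _
    _ = _ := by rw [expect_add_distrib, Fintype.expect_const, rademacherComplexity_eq_expect]

theorem card_le_of_pairwise_lt_sum_abs_sub (hA : IsCompact A) (hr : 0 < r) (hSA : ↑S ⊆ A)
    (hS : (S : Set (Fin n → ℝ)).Pairwise fun x y => 2 * r < ∑ i, |x i - y i|) :
    (S.card : ℝ) ≤ ((rademacherComplexity n A + r) / r) ^ n := by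
  have hRr : 0 < rademacherComplexity n A + r := by
    linarith [rademacherComplexity_nonneg n A]
  have h := card_mul_volume_signPolytope_le hA hSA hS
  rw [volume_signPolytope_const hr, volume_signPolytope_const hRr, ← mul_assoc,
    ENNReal.mul_le_mul_iff_left volume_signPolytope_one_pos.ne' volume_signPolytope_one_lt_top.ne,
    ← ENNReal.ofReal_natCast, ← ENNReal.ofReal_mul (Nat.cast_nonneg _),
    ENNReal.ofReal_le_ofReal_iff (by positivity)] at h
  rwa [div_pow, le_div_iff₀ (by positivity)]

end Packing

theorem exists_finset_cover_of_card_separated_le {α : Type*} {A : Set α} {p : α → α → Prop}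
    (hrefl : ∀ a, p a a) (hsymm : ∀ a b, p a b → p b a) {M : ℕ}
    (hM : ∀ S : Finset α, ↑S ⊆ A → (S : Set α).Pairwise (fun x y => ¬ p x y) → S.card ≤ M) :
    ∃ S : Finset α, S.card ≤ M ∧ ∀ a ∈ A, ∃ s ∈ S, p a s := by
  classical
  obtain ⟨S, ⟨hSA, hSsep⟩, hmax⟩ := (measure fun S : Finset α => M - S.card).wf.has_min
    {S | ↑S ⊆ A ∧ (S : Set α).Pairwise fun x y => ¬ p x y} ⟨∅, by simp, by simp⟩
  refine ⟨S, hM S hSA hSsep, fun a ha => ?_⟩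
  -- a maximal separated set is a net: otherwise `a` could be added to it
  by_contra! hfar
  have haS : a ∉ S := fun h => hfar a h (hrefl a)
  have hins : ↑(insert a S) ⊆ A ∧ (↑(insert a S) : Set α).Pairwise fun x y => ¬ p x y := by
    rw [coe_insert]
    exact ⟨Set.insert_subset ha hSA,
      hSsep.insert fun s hs _ => ⟨hfar s hs, fun h => hfar s hs (hsymm _ _ h)⟩⟩
  have hcard := hM _ hins.1 hins.2
  exact hmax _ hins (show M - (insert a S).card < M - S.card by
    rw [card_insert_of_notMem haS] at hcard ⊢; omega)

theorem exists_finset_card_le_subset_add_sum_abs_le {n : ℕ} {A : Set (Fin n → ℝ)}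
    (hA : IsCompact A) {r : ℝ} (hr : 0 < r) :
    ∃ S : Finset (Fin n → ℝ), (S.card : ℝ) ≤ ((rademacherComplexity n A + r) / r) ^ n ∧
      A ⊆ (S : Set (Fin n → ℝ)) + {x | ∑ i, |x i| ≤ 2 * r} := by
  obtain ⟨S, hcard, hcover⟩ := exists_finset_cover_of_card_separated_le (A := A)
    (p := fun a s => ∑ i, |a i - s i| ≤ 2 * r) (M := ⌊((rademacherComplexity n A + r) / r) ^ n⌋₊)
    (fun x => by simpa using hr.le) (fun x y h => by simpa only [abs_sub_comm] using h)
    (fun S hSA hS => Nat.le_floor <|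
      card_le_of_pairwise_lt_sum_abs_sub hA hr hSA (hS.imp fun _ _ => lt_of_not_ge))
  refine ⟨S, (Nat.cast_le.mpr hcard).trans (Nat.floor_le ?_), fun a ha => ?_⟩
  · have := rademacherComplexity_nonneg n A
    positivity
  · obtain ⟨s, hs, has⟩ := hcover a ha
    exact ⟨s, hs, a - s, has, add_sub_cancel _ _⟩

section CoveringNumber

variable {E : Type*} [AddCommGroup E] {A B : Set E}

theorem coveringNumber_le_card {S : Finset E} (h : A ⊆ ↑S + B) : coveringNumber A B ≤ S.card :=
  Nat.sInf_le ⟨S, rfl, h⟩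

theorem coveringNumber_pos {S : Finset E} (hA : A.Nonempty) (h : A ⊆ ↑S + B) :
    0 < coveringNumber A B := by
  obtain ⟨T, hT, hAT⟩ := Nat.sInf_mem (s := {n | ∃ S : Finset E, S.card = n ∧ A ⊆ ↑S + B})
    ⟨_, S, rfl, h⟩
  rw [coveringNumber, Nat.pos_iff_ne_zero, ← hT, Ne, Finset.card_eq_zero]
  rintro rfl
  simpa using hAT hA.some_mem

end CoveringNumber

theorem mul_log_le_rpow_sub_one {x : ℝ} (hx : 0 < x) (p : ℝ) : p * Real.log x ≤ x ^ p - 1 := by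
  rw [← Real.log_rpow hx]
  exact Real.log_le_sub_one_of_pos (Real.rpow_pos_of_pos hx p)

/-- Minoration of the Rademacher complexity via the `ℓ₁`-covering number:
`r(A) ≥ (ε/2)(N(A, εB₁)^{1/N} − 1) ≥ (ε/(2N)) log N(A, εB₁)`. -/
theorem rademacher_minoration_covering
    (N : ℕ) (hN : 0 < N) (A : Set (Fin N → ℝ)) (hA : IsCompact A) (hAne : A.Nonempty)
    (ε : ℝ) (hε : 0 < ε)
    (B₁ : Set (Fin N → ℝ)) (hB₁ : B₁ = {x | ∑ i, |x i| ≤ 1}) :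
    (ε / 2) * ((coveringNumber A (ε • B₁) : ℝ) ^ ((1 : ℝ) / N) - 1)
        ≤ rademacherComplexity N A ∧
    (ε / (2 * N)) * Real.log (coveringNumber A (ε • B₁))
        ≤ (ε / 2) * ((coveringNumber A (ε • B₁) : ℝ) ^ ((1 : ℝ) / N) - 1) := by
  set R := rademacherComplexity N A
  set M := coveringNumber A (ε • B₁)
  have hball : ε • B₁ = {x | ∑ i, |x i| ≤ 2 * (ε / 2)} := by
    rw [hB₁, mul_div_cancel₀ _ two_ne_zero, ← signPolytope_const, ← signPolytope_const,
      signPolytope_const_eq_smul hε]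
  obtain ⟨S, hScard, hScover⟩ := exists_finset_card_le_subset_add_sum_abs_le hA (half_pos hε)
  rw [← hball] at hScover
  have hMpos : (0 : ℝ) < M := Nat.cast_pos.mpr (coveringNumber_pos hAne hScover)
  have hroot : (M : ℝ) ^ ((1 : ℝ) / N) ≤ (R + ε / 2) / (ε / 2) := by
    have := rademacherComplexity_nonneg N A
    rw [one_div, Real.rpow_inv_le_iff_of_pos hMpos.le (by positivity) (by positivity),
      Real.rpow_natCast]
    exact (Nat.cast_le.mpr (coveringNumber_le_card hScover)).trans hScard
  constructor
  · calc ε / 2 * ((M : ℝ) ^ ((1 : ℝ) / N) - 1) ≤ ε / 2 * ((R + ε / 2) / (ε / 2) - 1) := by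
          gcongr
      _ = R := by field_simp; ring
  · calc ε / (2 * N) * Real.log M = ε / 2 * ((1 / N) * Real.log M) := by ring
      _ ≤ ε / 2 * ((M : ℝ) ^ ((1 : ℝ) / N) - 1) := by
          gcongr
          exact mul_log_le_rpow_sub_one hMpos _
end

section
/- Let t be a power of 2 and let A_t be a t×t Hadamard matrix (so A_tᵀA_t = t I_t). Let R ⊆ ℝ^t be the set of 2t signed standard basis vectors ±e_1,...,±e_t. Then every point of A_t R lies in [−1,1]^t, and t^{−1/2}[−1,1]^t ⊆ conv(A_t R). -/
/-!
If `Aᵀ A = t • 1` then `A / √t` is an isometry for the Euclidean norm, so `x = A y` satisfies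
`‖y‖₁ ≤ √t ‖y‖₂ = ‖x‖₂ ≤ √t ‖x‖∞`. Hence every `x` with `‖x‖∞ ≤ t^{-1/2}` is the image of a
point of the ℓ¹ unit ball, which is the convex hull of the `±eᵢ`.
-/

open Matrix

def signedBasis (𝕜 ι : Type*) [Ring 𝕜] [DecidableEq ι] : Set (ι → 𝕜) :=
  {x | ∃ i : ι, x = Pi.single i 1 ∨ x = Pi.single i (-1)}

section CrossPolytope

variable {𝕜 ι : Type*} [Field 𝕜] [LinearOrder 𝕜] [IsStrictOrderedRing 𝕜] [DecidableEq ι]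

lemma zero_mem_convexHull_signedBasis [Nonempty ι] :
    (0 : ι → 𝕜) ∈ convexHull 𝕜 (signedBasis 𝕜 ι) := by
  obtain ⟨i⟩ := ‹Nonempty ι›
  have h := convex_convexHull 𝕜 (signedBasis 𝕜 ι) (subset_convexHull 𝕜 _ ⟨i, Or.inl rfl⟩)
    (subset_convexHull 𝕜 _ ⟨i, Or.inr rfl⟩) (by norm_num : (0 : 𝕜) ≤ 1 / 2)
    (by norm_num : (0 : 𝕜) ≤ 1 / 2) (add_halves 1)
  rwa [← smul_add, ← Pi.single_add, add_neg_cancel, Pi.single_zero, smul_zero] at h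

lemma mem_convexHull_signedBasis_of_sum_abs_le_one [Fintype ι] [Nonempty ι] {y : ι → 𝕜}
    (hy : ∑ i, |y i| ≤ 1) : y ∈ convexHull 𝕜 (signedBasis 𝕜 ι) := by
  -- `y = ∑ |y i| • (±eᵢ)`, and the remaining weight `1 - ∑ |y i|` goes to `0`.
  let w : Option ι → 𝕜 := fun o => o.elim (1 - ∑ i, |y i|) (|y ·|)
  let z : Option ι → ι → 𝕜 := fun o => o.elim 0 fun i => Pi.single i (if 0 ≤ y i then 1 else -1)
  have hwz : ∑ o, w o • z o = y := by
    ext j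
    simp only [Fintype.sum_option, w, z]
    rcases le_or_gt 0 (y j) with h | h
    · simp [Finset.sum_apply, Pi.single_apply, h, abs_of_nonneg]
    · simp [Finset.sum_apply, Pi.single_apply, h.not_ge, abs_of_neg h]
  rw [← hwz]
  refine (convex_convexHull 𝕜 _).sum_mem (fun o _ => ?_) ?_ (fun o _ => ?_)
  · cases o with
    | none => exact sub_nonneg.2 hy
    | some i => exact abs_nonneg (y i)
  · simp [w, Fintype.sum_option]
  · cases o with
    | none => exact zero_mem_convexHull_signedBasis
    | some i =>
      refine subset_convexHull 𝕜 _ ⟨i, ?_⟩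
      by_cases h : 0 ≤ y i <;> simp [z, h]

end CrossPolytope

section Orthogonal

variable {m n R : Type*} [Fintype m] [Fintype n] [DecidableEq n]

lemma Matrix.dotProduct_mulVec_self_of_transpose_mul_self [CommSemiring R] {A : Matrix m n R}
    {c : R} (hA : Aᵀ * A = c • 1) (y : n → R) :
    A *ᵥ y ⬝ᵥ A *ᵥ y = c * (y ⬝ᵥ y) := by
  rw [dotProduct_comm, dotProduct_mulVec, ← mulVec_transpose, mulVec_mulVec, hA, smul_mulVec,
    one_mulVec, smul_dotProduct, smul_eq_mul]

lemma Matrix.mulVec_surjective_of_transpose_mul_self [Field R] {A : Matrix n n R} {c : R}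
    (hc : c ≠ 0) (hA : Aᵀ * A = c • 1) : Function.Surjective A.mulVec :=
  mulVec_surjective_iff_exists_right_inverse.2
    ⟨c⁻¹ • Aᵀ, mul_eq_one_comm.1 (by rw [smul_mul, hA, smul_smul, inv_mul_cancel₀ hc, one_smul])⟩

omit [DecidableEq n] in
lemma sq_sum_abs_le_card_mul_dotProduct_self (y : n → ℝ) :
    (∑ i, |y i|) ^ 2 ≤ Fintype.card n * (y ⬝ᵥ y) := by
  simpa [dotProduct, ← sq] using sq_sum_le_card_mul_sum_sq (s := Finset.univ) (f := (|y ·|))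

omit [DecidableEq n] in
lemma dotProduct_self_le_one_of_abs_le {x : n → ℝ}
    (hx : ∀ j, |x j| ≤ (√(Fintype.card n))⁻¹) : x ⬝ᵥ x ≤ 1 := by
  have hsq : ∀ j, x j * x j ≤ (Fintype.card n : ℝ)⁻¹ := fun j => by
    rw [← abs_mul_abs_self, ← Real.mul_self_sqrt (Nat.cast_nonneg (Fintype.card n)), mul_inv]
    exact mul_self_le_mul_self (abs_nonneg _) (hx j)
  calc x ⬝ᵥ x ≤ ∑ _j : n, (Fintype.card n : ℝ)⁻¹ := Finset.sum_le_sum fun j _ => hsq j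
    _ = Fintype.card n * (Fintype.card n : ℝ)⁻¹ := by simp
    _ ≤ 1 := mul_inv_le_one

lemma sum_abs_le_one_of_transpose_mul_self {A : Matrix n n ℝ}
    (hA : Aᵀ * A = (Fintype.card n : ℝ) • 1) {y : n → ℝ}
    (hy : ∀ j, |(A *ᵥ y) j| ≤ (√(Fintype.card n))⁻¹) : ∑ i, |y i| ≤ 1 := by
  have hsq : (∑ i, |y i|) ^ 2 ≤ 1 := calc
    _ ≤ Fintype.card n * (y ⬝ᵥ y) := sq_sum_abs_le_card_mul_dotProduct_self y
    _ = A *ᵥ y ⬝ᵥ A *ᵥ y := (dotProduct_mulVec_self_of_transpose_mul_self hA y).symm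
    _ ≤ 1 := dotProduct_self_le_one_of_abs_le hy
  exact (pow_le_one_iff_of_nonneg (Finset.sum_nonneg fun i _ => abs_nonneg _) two_ne_zero).1 hsq

end Orthogonal

/-- Let `t` be a power of 2 and `A` a `t×t` Hadamard matrix (entries `±1`,
`Aᵀ A = t I`).  Let `R` be the set of `2t` signed standard basis vectors
`±e₁, …, ±e_t` of `ℝ^t`.  Then every point of `A · R` lies in `[-1,1]^t`, and
`t^{-1/2}·[-1,1]^t ⊆ conv(A · R)`. -/
theorem hadamard_image_of_cross_polytope
    (t : ℕ) (ht : ∃ k : ℕ, t = 2 ^ k)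
    (A : Matrix (Fin t) (Fin t) ℝ)
    (hentries : ∀ i j, A i j = 1 ∨ A i j = -1)
    (horth : A.transpose * A = (t : ℝ) • 1)
    (R : Set (Fin t → ℝ))
    (hR : R = {x | ∃ i : Fin t, x = Pi.single i 1 ∨ x = Pi.single i (-1)}) :
    (∀ v ∈ A.mulVec '' R, ∀ j, |v j| ≤ 1) ∧
    ∀ x : Fin t → ℝ, (∀ j, |x j| ≤ (Real.sqrt t)⁻¹) →
      x ∈ convexHull ℝ (A.mulVec '' R) := by
  obtain ⟨k, rfl⟩ := ht
  change R = signedBasis ℝ _ at hR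
  subst hR
  refine ⟨?_, fun x hx => ?_⟩
  · rintro _ ⟨_, ⟨i, rfl | rfl⟩, rfl⟩ j <;> rcases hentries j i with h | h <;>
      simp [mulVec_single, h]
  · obtain ⟨y, rfl⟩ := mulVec_surjective_of_transpose_mul_self (by positivity) horth x
    rw [← coe_mulVecLin, ← LinearMap.image_convexHull]
    refine ⟨y, mem_convexHull_signedBasis_of_sum_abs_le_one ?_, rfl⟩
    exact sum_abs_le_one_of_transpose_mul_self (by rwa [Fintype.card_fin])
      (by rwa [Fintype.card_fin])
end

section
/- Let d_1,...,d_n be nonnegative integers with N := d_1+...+d_n, let each C_i be a nondegenerate linear image of [−1,1]^{d_i}, and let t be a power of 2. Then there exists a finite set S_n ⊆ C_1 × ... × C_n with |S_n| = (2t)^{⌊N/t⌋} · 2^{N − ⌊N/t⌋ t} such that (1/√t)·(C_1 × ... × C_n) ⊆ conv(S_n). -/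
/-!
In coordinates adapted to the `L i`, the product of the `C i` is the cube `[-1,1]^N`, which
we regroup as `⌊N/t⌋` cubes of dimension `t` and `N - ⌊N/t⌋t` segments. For a Hadamard matrix
`H` of order `t`, the `2t` points `±(rows of H)` lie in `[-1,1]^t` and their convex hull is the
ball spanned by them for the `ℓ¹`-norm of the coefficients. Every `x ∈ [-1,1]^t` satisfies
`x / √t = ∑ₐ cₐ Hₐ` with `c = t^{-3/2} Hx`, and Cauchy–Schwarz together with
`‖Hx‖₂ = √t ‖x‖₂ ≤ t` gives `∑ₐ |cₐ| ≤ 1`. Convex hulls commute with products, and Sylvester's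
construction provides Hadamard matrices of every order `2^k`.
-/

open Set Metric Matrix
open scoped Pointwise Kronecker

def IsSample {E : Type*} [AddCommGroup E] [Module ℝ E] (c : ℝ) (K S : Set E) : Prop :=
  S ⊆ K ∧ c • K ⊆ convexHull ℝ S

namespace IsSample

variable {E F : Type*} [AddCommGroup E] [Module ℝ E] [AddCommGroup F] [Module ℝ F]
  {c c' : ℝ} {K S : Set E}

theorem of_abs_le (hK : Balanced ℝ K) (hc : |c'| ≤ |c|) (h : IsSample c K S) :
    IsSample c' K S :=
  ⟨h.1, (hK.smul_mono hc).trans h.2⟩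

theorem image (f : E →ₗ[ℝ] F) (h : IsSample c K S) : IsSample c (f '' K) (f '' S) := by
  refine ⟨image_mono h.1, ?_⟩
  rw [← image_smul_set, ← f.image_convexHull]
  exact image_mono h.2

theorem exists_finset_image (f : E ≃ₗ[ℝ] F) {S : Finset E} (h : IsSample c K S) :
    ∃ S' : Finset F, IsSample c (f '' K) S' ∧ S'.card = S.card := by
  classical
  refine ⟨S.image f, ?_, S.card_image_of_injective f.injective⟩
  simpa using h.image f.toLinearMap

theorem pi {ι : Type*} [Finite ι] {E : ι → Type*} [∀ i, AddCommGroup (E i)]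
    [∀ i, Module ℝ (E i)] {K S : ∀ i, Set (E i)} (h : ∀ i, IsSample c (K i) (S i)) :
    IsSample c (univ.pi K) (univ.pi S) := by
  refine ⟨pi_mono fun i _ => (h i).1, ?_⟩
  rw [smul_set_univ_pi, convexHull_pi]
  exact pi_mono fun i _ => (h i).2

end IsSample

theorem AbsConvex.sum_smul_mem {E ι : Type*} [AddCommGroup E] [Module ℝ E] {K : Set E}
    (hK : AbsConvex ℝ K) (hne : K.Nonempty) {s : Finset ι} {v : ι → E} (hv : ∀ a ∈ s, v a ∈ K)
    {c : ι → ℝ} (hc : ∑ a ∈ s, |c a| ≤ 1) : ∑ a ∈ s, c a • v a ∈ K := by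
  set T := ∑ a ∈ s, |c a|
  rcases (Finset.sum_nonneg fun a _ => abs_nonneg (c a) : 0 ≤ T).eq_or_lt with hT | hT
  · have hc0 : ∀ a ∈ s, c a = 0 := fun a ha =>
      abs_eq_zero.1 ((Finset.sum_eq_zero_iff_of_nonneg fun a _ => abs_nonneg (c a)).1 hT.symm a ha)
    rw [Finset.sum_eq_zero fun a ha => by rw [hc0 a ha, zero_smul]]
    exact hK.1.zero_mem hne
  have hsign : ∀ a ∈ s, (SignType.sign (c a) : ℝ) • v a ∈ K := fun a ha =>
    hK.1.smul_mem (by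
      rcases lt_trichotomy (c a) 0 with h | h | h <;> simp [h, sign_neg, sign_pos]) (hv a ha)
  have hmem : ∑ a ∈ s, (|c a| / T) • (SignType.sign (c a) : ℝ) • v a ∈ K :=
    hK.2.sum_mem (fun a _ => by positivity) (by rw [← Finset.sum_div, div_self hT.ne']) hsign
  convert hK.1.smul_mem (a := T) (by rwa [Real.norm_eq_abs, abs_of_pos hT]) hmem using 1
  rw [Finset.smul_sum]
  refine Finset.sum_congr rfl fun a _ => ?_
  rw [smul_smul, smul_smul, mul_div_cancel₀ _ hT.ne', abs_mul_sign]

theorem mem_closedBall_zero_iff_forall_abs_le {ι : Type*} [Fintype ι] {x : ι → ℝ} {r : ℝ}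
    (hr : 0 ≤ r) : x ∈ closedBall (0 : ι → ℝ) r ↔ ∀ j, |x j| ≤ r := by
  simp [pi_norm_le_iff_of_nonneg hr]

namespace Matrix.IsHadamard

variable {ι : Type*} [Fintype ι] [DecidableEq ι] {H : Matrix ι ι ℝ}

theorem abs_apply (hH : H.IsHadamard) (i j : ι) : |H i j| = 1 := by
  rw [abs_eq zero_le_one, ← Unitary.mem_iff_eq_one_or_eq_neg_one]
  exact hH.apply_mem i j

theorem row_mem_closedBall (hH : H.IsHadamard) (i : ι) : H i ∈ closedBall 0 1 :=
  (mem_closedBall_zero_iff_forall_abs_le zero_le_one).2 fun j => (hH.abs_apply i j).le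

theorem dotProduct_row (hH : H.IsHadamard) (a b : ι) :
    H a ⬝ᵥ H b = if a = b then (Fintype.card ι : ℝ) else 0 := by
  have := congr_fun₂ hH.mul_conjTranspose a b
  rw [conjTranspose_eq_transpose_of_trivial, mul_apply'] at this
  simpa [one_apply] using this

theorem transpose_mulVec_mulVec (hH : H.IsHadamard) (x : ι → ℝ) :
    Hᵀ *ᵥ (H *ᵥ x) = (Fintype.card ι : ℝ) • x := by
  rw [mulVec_mulVec, ← conjTranspose_eq_transpose_of_trivial, hH.conjTranspose_mul, smul_mulVec,
    one_mulVec]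

theorem sum_mulVec_sq (hH : H.IsHadamard) (x : ι → ℝ) :
    ∑ a, (H *ᵥ x) a ^ 2 = Fintype.card ι * ∑ j, x j ^ 2 := by
  calc ∑ a, (H *ᵥ x) a ^ 2 = (H *ᵥ x) ⬝ᵥ (H *ᵥ x) := by simp [dotProduct, sq]
    _ = (Hᵀ *ᵥ (H *ᵥ x)) ⬝ᵥ x := by rw [dotProduct_mulVec, mulVec_transpose]
    _ = Fintype.card ι * ∑ j, x j ^ 2 := by
      rw [hH.transpose_mulVec_mulVec, smul_dotProduct, smul_eq_mul]
      simp [dotProduct, sq]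

theorem sum_abs_mulVec_le (hH : H.IsHadamard) {x : ι → ℝ} (hx : x ∈ closedBall 0 1) :
    ∑ a, |(H *ᵥ x) a| ≤ Fintype.card ι * √(Fintype.card ι) := by
  set m : ℝ := (Fintype.card ι : ℝ)
  have hm : 0 ≤ m := Nat.cast_nonneg _
  have hx2 : ∑ j, x j ^ 2 ≤ m := by
    calc ∑ j, x j ^ 2 ≤ ∑ _j : ι, (1 : ℝ) :=
          Finset.sum_le_sum fun j _ => (sq_le_one_iff_abs_le_one _).2
            ((mem_closedBall_zero_iff_forall_abs_le zero_le_one).1 hx j)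
      _ = m := by simp [m]
  have hcs : (∑ a, |(H *ᵥ x) a|) ^ 2 ≤ (m * √m) ^ 2 :=
    calc (∑ a, |(H *ᵥ x) a|) ^ 2 ≤ m * ∑ a, (H *ᵥ x) a ^ 2 := by
          simpa using sq_sum_le_card_mul_sum_sq (s := Finset.univ) (f := fun a => |(H *ᵥ x) a|)
      _ = m * (m * ∑ j, x j ^ 2) := by rw [hH.sum_mulVec_sq]
      _ ≤ m * (m * m) := by gcongr
      _ = (m * √m) ^ 2 := by rw [mul_pow, Real.sq_sqrt hm]; ring
  exact le_of_sq_le_sq hcs (by positivity)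

theorem injective [Nonempty ι] (hH : H.IsHadamard) : Function.Injective H := by
  intro a b hab
  by_contra hne
  have := hH.dotProduct_row a b
  rw [if_neg hne, hab, hH.dotProduct_row, if_pos rfl] at this
  exact Fintype.card_ne_zero (Nat.cast_eq_zero.1 this)

theorem row_ne_neg_row [Nonempty ι] (hH : H.IsHadamard) (a b : ι) : H a ≠ -H b := by
  intro hab
  have := hH.dotProduct_row a b
  rw [hab, neg_dotProduct, hH.dotProduct_row, if_pos rfl] at this
  have hm : (Fintype.card ι : ℝ) ≠ 0 := Nat.cast_ne_zero.2 Fintype.card_ne_zero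
  split_ifs at this <;> [exact hm (by linarith); exact hm (neg_eq_zero.1 this)]

theorem isSample [Nonempty ι] (hH : H.IsHadamard) :
    IsSample (√(Fintype.card ι))⁻¹ (closedBall 0 1) (range H ∪ -range H) := by
  set m : ℝ := (Fintype.card ι : ℝ) with hm_def
  have hm : 0 < m := Nat.cast_pos.2 Fintype.card_pos
  refine ⟨union_subset (range_subset_iff.2 hH.row_mem_closedBall) ?_, ?_⟩
  · rintro x ⟨a, ha⟩
    rw [← neg_neg x, ← ha, mem_closedBall_zero_iff, norm_neg, ← mem_closedBall_zero_iff]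
    exact hH.row_mem_closedBall a
  refine smul_set_subset_iff.2 fun x hx => ?_
  set c : ι → ℝ := (m * √m)⁻¹ • (H *ᵥ x)
  have hc : ∑ a, |c a| ≤ 1 := by
    simp only [c, Pi.smul_apply, smul_eq_mul, abs_mul, ← Finset.mul_sum,
      abs_of_pos (by positivity : 0 < (m * √m)⁻¹)]
    exact inv_mul_le_one_of_le₀ (hH.sum_abs_mulVec_le hx) (by positivity)
  have hx : (√m)⁻¹ • x = ∑ a, c a • H a := by
    rw [← vecMul_eq_sum, ← mulVec_transpose, mulVec_smul, hH.transpose_mulVec_mulVec, ← hm_def,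
      smul_smul]
    congr 1
    field_simp
  rw [hx, convexHull_union_neg_eq_absConvexHull]
  exact absConvex_absConvexHull.sum_smul_mem ((range_nonempty H).mono subset_absConvexHull)
    (fun a _ => subset_absConvexHull (mem_range_self a)) hc

theorem exists_finset_isSample [Nonempty ι] (hH : H.IsHadamard) :
    ∃ S : Finset (ι → ℝ), IsSample (√(Fintype.card ι))⁻¹ (closedBall (0 : ι → ℝ) 1) S ∧
      S.card = 2 * Fintype.card ι := by
  refine ⟨Finset.univ.image (H ·) ∪ -Finset.univ.image (H ·), ?_, ?_⟩
  · rw [Finset.coe_union, Finset.coe_neg, Finset.coe_image, Finset.coe_univ, image_univ]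
    exact hH.isSample
  · rw [Finset.card_union_of_disjoint, Finset.card_neg,
      Finset.card_image_of_injective _ hH.injective, Finset.card_univ, two_mul]
    simp only [Finset.disjoint_left, Finset.mem_neg, Finset.mem_image, Finset.mem_univ, true_and]
    rintro _ ⟨a, rfl⟩ ⟨_, ⟨b, rfl⟩, hab⟩
    exact hH.row_ne_neg_row a b hab.symm

end Matrix.IsHadamard

namespace Matrix

theorem isHadamard_one_fin_one : (1 : Matrix (Fin 1) (Fin 1) ℝ).IsHadamard := by
  refine ⟨fun i j => ?_, by simp, by simp⟩
  rw [Subsingleton.elim i j, one_apply_eq]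
  exact one_mem _

theorem isHadamard_fin_two : !![(1 : ℝ), 1; 1, -1].IsHadamard := by
  refine ⟨fun i j => ?_, ?_, ?_⟩
  · fin_cases i <;> fin_cases j <;> simp [Unitary.mem_iff_eq_one_or_eq_neg_one]
  all_goals
    ext i j
    fin_cases i <;> fin_cases j <;> simp [mul_apply, Fin.sum_univ_two, one_add_one_eq_two]

theorem exists_isHadamard_fin_two_pow (k : ℕ) :
    ∃ H : Matrix (Fin (2 ^ k)) (Fin (2 ^ k)) ℝ, H.IsHadamard := by
  induction k with
  | zero => exact ⟨1, isHadamard_one_fin_one⟩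
  | succ k ih =>
    obtain ⟨H, hH⟩ := ih
    exact ⟨_, (hH.kronecker isHadamard_fin_two).reindex finProdFinEquiv finProdFinEquiv⟩

end Matrix

theorem exists_finset_isSample_fin_one {c : ℝ} (hc : |c| ≤ 1) :
    ∃ S : Finset (Fin 1 → ℝ), IsSample c (closedBall (0 : Fin 1 → ℝ) 1) S ∧ S.card = 2 := by
  obtain ⟨S, hS, hcard⟩ := isHadamard_one_fin_one.exists_finset_isSample
  refine ⟨S, hS.of_abs_le balanced_closedBall_zero ?_, hcard⟩
  simpa using hc

theorem exists_linearEquiv_image_closedBall {ι κ : Type*} [Fintype ι] [Fintype κ]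
    {α : ι → Type*} {β : κ → Type*} [∀ i, Fintype (α i)] [∀ j, Fintype (β j)]
    (e : (Σ i, α i) ≃ Σ j, β j) :
    ∃ Φ : (∀ i, α i → ℝ) ≃ₗ[ℝ] ∀ j, β j → ℝ, Φ '' closedBall 0 1 = closedBall 0 1 := by
  refine ⟨(LinearEquiv.piCurry ℝ fun i (_ : α i) => ℝ).symm ≪≫ₗ
    LinearEquiv.funCongrLeft ℝ ℝ e.symm ≪≫ₗ LinearEquiv.piCurry ℝ fun j (_ : β j) => ℝ, ?_⟩
  ext y
  rw [LinearEquiv.image_eq_preimage_symm, mem_preimage]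
  simp only [mem_closedBall_zero_iff, pi_norm_le_iff_of_nonneg zero_le_one, Real.norm_eq_abs]
  change (∀ i a, |y (e ⟨i, a⟩).1 (e ⟨i, a⟩).2| ≤ 1) ↔ _
  rw [← Sigma.forall (p := fun p => |y (e p).1 (e p).2| ≤ 1)]
  exact (e.forall_congr_right (q := fun p => |y p.1 p.2| ≤ 1)).trans Sigma.forall

theorem exists_finset_isSample_pi_closedBall {ι : Type*} [Fintype ι] (α : ι → Type*)
    [∀ i, Fintype (α i)] {N : ℕ} (hN : Fintype.card (Σ i, α i) = N) {t : ℕ} (ht : 0 < t)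
    {H : Matrix (Fin t) (Fin t) ℝ} (hH : H.IsHadamard) :
    ∃ S : Finset (∀ i, α i → ℝ), IsSample (√t)⁻¹ (closedBall (0 : ∀ i, α i → ℝ) 1) S ∧
      S.card = (2 * t) ^ (N / t) * 2 ^ (N - N / t * t) := by
  set q := N / t
  set r := N - q * t
  let dim : Fin q ⊕ Fin r → ℕ := Sum.elim (fun _ => t) (fun _ => 1)
  have hfactor : ∀ j, ∃ S : Finset (Fin (dim j) → ℝ),
      IsSample (√t)⁻¹ (closedBall (0 : Fin (dim j) → ℝ) 1) S ∧ S.card = 2 * dim j := by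
    rintro (j | j)
    · have : Nonempty (Fin t) := ⟨⟨0, ht⟩⟩
      obtain ⟨S, hS, hcard⟩ := hH.exists_finset_isSample
      rw [Fintype.card_fin] at hS hcard
      exact ⟨S, hS, hcard⟩
    · refine exists_finset_isSample_fin_one ?_
      rw [abs_of_nonneg (by positivity)]
      exact inv_le_one_of_one_le₀ (Real.one_le_sqrt.2 (by exact_mod_cast ht))
  choose S hS hcard using hfactor
  have hprod :
      IsSample (√t)⁻¹ (closedBall (0 : ∀ j, Fin (dim j) → ℝ) 1) (Fintype.piFinset S) := by
    rw [closedBall_pi _ zero_le_one, Fintype.coe_piFinset]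
    exact IsSample.pi hS
  have hcard_sigma : Fintype.card (Σ j, Fin (dim j)) = N := by
    simp only [Fintype.card_sigma, Fintype.card_fin, Fintype.sum_sum_type, Sum.elim_inl,
      Sum.elim_inr, Finset.sum_const, Finset.card_univ, smul_eq_mul, mul_one, q, r, dim]
    exact Nat.add_sub_cancel' (Nat.div_mul_le_self N t)
  obtain ⟨Φ, hΦ⟩ := exists_linearEquiv_image_closedBall
    ((Fintype.equivOfCardEq (hcard_sigma.trans hN.symm)) : (Σ j, Fin (dim j)) ≃ (Σ i, α i))
  obtain ⟨S', hS', hcard'⟩ := hprod.exists_finset_image Φ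
  refine ⟨S', hΦ ▸ hS', ?_⟩
  rw [hcard', Fintype.card_piFinset, Fintype.prod_sum_type]
  simp only [hcard]
  simp [dim]

/-- Sampling from a product of cubes (via Hadamard matrices).  Let `d₁, …, dₙ` be
nonnegative integers with `N = d₁ + ⋯ + dₙ`, let each `Cᵢ` be a nondegenerate linear
image of `[-1,1]^{dᵢ}`, and let `t` be a power of 2.  Then there is a finite set
`Sₙ ⊆ C₁ × ⋯ × Cₙ` with `|Sₙ| = (2t)^{⌊N/t⌋} · 2^{N − ⌊N/t⌋t}` such that
`(1/√t)·(C₁ × ⋯ × Cₙ) ⊆ conv(Sₙ)`. -/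
theorem sampling_from_polytope
    (n : ℕ) (d : Fin n → ℕ) (N : ℕ) (hN : N = ∑ i, d i)
    (t : ℕ) (ht : ∃ k : ℕ, t = 2 ^ k)
    (L : ∀ i : Fin n, (Fin (d i) → ℝ) ≃ₗ[ℝ] (Fin (d i) → ℝ))
    (C : ∀ i : Fin n, Set (Fin (d i) → ℝ))
    (hC : ∀ i, C i = ⇑(L i) '' {x | ∀ j, |x j| ≤ 1}) :
    ∃ S : Finset (∀ i : Fin n, Fin (d i) → ℝ),
      (↑S : Set (∀ i : Fin n, Fin (d i) → ℝ)) ⊆ Set.univ.pi C ∧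
      S.card = (2 * t) ^ (N / t) * 2 ^ (N - (N / t) * t) ∧
      ∀ x ∈ Set.univ.pi C, (Real.sqrt t)⁻¹ • x ∈ convexHull ℝ (↑S) := by
  obtain ⟨k, rfl⟩ := ht
  obtain ⟨H, hH⟩ := exists_isHadamard_fin_two_pow k
  obtain ⟨S, hS, hcard⟩ := exists_finset_isSample_pi_closedBall (fun i => Fin (d i))
    (N := N) (by simp [hN]) (by positivity) hH
  have hC' : LinearEquiv.piCongrRight L '' closedBall 0 1 = univ.pi C := by
    rw [closedBall_pi _ zero_le_one]
    refine (piMap_image_univ_pi _ _).trans (pi_congr rfl fun i _ => ?_)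
    rw [hC]
    congr 1
    ext x
    exact mem_closedBall_zero_iff_forall_abs_le zero_le_one
  obtain ⟨S', hS', hcard'⟩ := hS.exists_finset_image (LinearEquiv.piCongrRight L)
  rw [hC'] at hS'
  exact ⟨S', hS'.1, hcard'.trans hcard, fun x hx => hS'.2 (smul_mem_smul_set hx)⟩
end

section
/- Let P_{Y|X} be a channel with finite alphabets. Then sup_{P_X} inf_{Q_Y} D(P_{Y|X} ‖ Q_Y | P_X) = inf_{Q_Y} sup_{P_X} D(P_{Y|X} ‖ Q_Y | P_X) = inf_{Q_Y} sup_{x∈X} D(P_{Y|X=x} ‖ Q_Y), and moreover the minimizing output distribution Q_Y (the capacity-achieving output distribution) is unique. -/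
open scoped BigOperators

/-- Kullback–Leibler divergence `D(p‖q)` between two finitely supported distributions,
valued in `EReal` (it is `⊤` when `p` is not absolutely continuous w.r.t. `q`, and the
terms with `p y = 0` contribute `0`). -/
noncomputable def klDiv {Y : Type} [Fintype Y] (p q : Y → ℝ) : EReal :=
  if ∀ y, q y = 0 → p y = 0 then
    ((∑ y, if p y = 0 then 0 else p y * Real.log (p y / q y) : ℝ) : EReal)
  else ⊤

/-- The probability simplex on a finite alphabet. -/
def probSimplex (α : Type) [Fintype α] : Set (α → ℝ) :=
  {p | (∀ a, 0 ≤ p a) ∧ ∑ a, p a = 1}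

/-!
The common value is the capacity `C = max_p I(p)`, attained at some `p₀` because mutual
information is continuous on the compact simplex. Everything rests on the identity
`∑ₓ p x · D(P x ‖ q) = I(p) + D(pP ‖ q)`: it gives `inf_q ∑ₓ p₀ x · D(P x ‖ q) = C`, hence
`C ≤ sup inf`. For the reverse bound, mixing `p₀` with a point mass `δₓ` and using the same
identity at `q_t = (1 - t) p₀P + t P x` shows `D(P x ‖ q_t) ≤ C` for `t ∈ (0, 1)`; letting
`t → 0` gives `D(P x ‖ p₀P) ≤ C` for every `x`, so `inf_q sup_x ≤ C`. Finally a minimiser `q`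
satisfies `C + D(p₀P ‖ q) ≤ sup_x D(P x ‖ q) = C`, so `q = p₀P` by Gibbs' inequality.
-/

open Finset Real Filter Topology

theorem EReal.coe_finset_sum {ι : Type*} (s : Finset ι) (f : ι → ℝ) :
    ((∑ i ∈ s, f i : ℝ) : EReal) = ∑ i ∈ s, (f i : EReal) :=
  map_sum (⟨⟨Real.toEReal, EReal.coe_zero⟩, EReal.coe_add⟩ : ℝ →+ EReal) f s

theorem mul_log_sub_mul_log_le {a b : ℝ} (ha : 0 ≤ a) (hb : 0 ≤ b) (hab : b = 0 → a = 0) :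
    a * log b - a * log a ≤ b - a := by
  rcases ha.eq_or_lt with rfl | ha
  · simpa using hb
  have hb : 0 < b := hb.lt_of_ne fun h => ha.ne' (hab h.symm)
  calc a * log b - a * log a = a * log (b / a) := by rw [log_div hb.ne' ha.ne']; ring
    _ ≤ a * (b / a - 1) := by gcongr; exact log_le_sub_one_of_pos (by positivity)
    _ = b - a := by field_simp

theorem mul_log_sub_mul_log_lt {a b : ℝ} (ha : 0 ≤ a) (hb : 0 ≤ b) (hab : b = 0 → a = 0)
    (hne : a ≠ b) : a * log b - a * log a < b - a := by
  rcases ha.eq_or_lt with rfl | ha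
  · simpa using hb.lt_of_ne hne
  have hb : 0 < b := hb.lt_of_ne fun h => ha.ne' (hab h.symm)
  have hba : b / a ≠ 1 := fun h => hne ((div_eq_one_iff_eq ha.ne').1 h).symm
  calc a * log b - a * log a = a * log (b / a) := by rw [log_div hb.ne' ha.ne']; ring
    _ < a * (b / a - 1) := by gcongr; exact log_lt_sub_one_of_pos (by positivity) hba
    _ = b - a := by field_simp

section Divergence

variable {Y : Type} [Fintype Y]

/-- Equals `klDiv p q` when `q y = 0 → p y = 0` (`klDiv_eq_coe_klDivReal`); otherwise it is a
junk value, since `log 0 = 0`. -/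
noncomputable def klDivReal (p q : Y → ℝ) : ℝ :=
  ∑ y, p y * log (p y) - ∑ y, p y * log (q y)

theorem klDiv_eq_coe_klDivReal {p q : Y → ℝ} (h : ∀ y, q y = 0 → p y = 0) :
    klDiv p q = klDivReal p q := by
  rw [klDiv, if_pos h, klDivReal, ← sum_sub_distrib]
  refine congrArg _ (sum_congr rfl fun y _ => ?_)
  split_ifs with hp
  · simp [hp]
  · rw [log_div hp fun hq => hp (h y hq)]; ring

theorem klDiv_eq_top {p q : Y → ℝ} {y : Y} (hq : q y = 0) (hp : p y ≠ 0) : klDiv p q = ⊤ :=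
  if_neg fun h => hp (h y hq)

theorem klDivReal_eq_sum_sub {p q : Y → ℝ} (hp : p ∈ probSimplex Y) (hq : q ∈ probSimplex Y) :
    klDivReal p q = ∑ y, (q y - p y - (p y * log (q y) - p y * log (p y))) := by
  simp only [sum_sub_distrib, hp.2, hq.2, klDivReal]; ring

theorem klDivReal_nonneg {p q : Y → ℝ} (hp : p ∈ probSimplex Y) (hq : q ∈ probSimplex Y)
    (h : ∀ y, q y = 0 → p y = 0) : 0 ≤ klDivReal p q := by
  rw [klDivReal_eq_sum_sub hp hq]
  exact sum_nonneg fun y _ => sub_nonneg.2 (mul_log_sub_mul_log_le (hp.1 y) (hq.1 y) (h y))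

theorem klDivReal_pos {p q : Y → ℝ} (hp : p ∈ probSimplex Y) (hq : q ∈ probSimplex Y)
    (h : ∀ y, q y = 0 → p y = 0) (hne : p ≠ q) : 0 < klDivReal p q := by
  obtain ⟨y, hy⟩ := Function.ne_iff.1 hne
  rw [klDivReal_eq_sum_sub hp hq]
  exact sum_pos' (fun y _ => sub_nonneg.2 (mul_log_sub_mul_log_le (hp.1 y) (hq.1 y) (h y)))
    ⟨y, mem_univ y, sub_pos.2 (mul_log_sub_mul_log_lt (hp.1 y) (hq.1 y) (h y) hy)⟩

theorem klDiv_nonneg {p q : Y → ℝ} (hp : p ∈ probSimplex Y) (hq : q ∈ probSimplex Y) :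
    0 ≤ klDiv p q := by
  by_cases h : ∀ y, q y = 0 → p y = 0
  · rw [klDiv_eq_coe_klDivReal h]; exact EReal.coe_nonneg.2 (klDivReal_nonneg hp hq h)
  · rw [klDiv, if_neg h]; exact le_top

theorem klDiv_pos {p q : Y → ℝ} (hp : p ∈ probSimplex Y) (hq : q ∈ probSimplex Y)
    (hne : p ≠ q) : 0 < klDiv p q := by
  by_cases h : ∀ y, q y = 0 → p y = 0
  · rw [klDiv_eq_coe_klDivReal h]; exact EReal.coe_pos.2 (klDivReal_pos hp hq h hne)
  · rw [klDiv, if_neg h]; exact EReal.zero_lt_top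

theorem sum_mul_log_sub_mul_log_le_klDivReal {p q : Y → ℝ} (hp : ∀ y, 0 ≤ p y)
    (hq : q ∈ probSimplex Y) (y : Y) :
    ∑ z, p z * log (p z) - p y * log (q y) ≤ klDivReal p q := by
  classical
  have hle : ∑ z, p z * log (q z) ≤ p y * log (q y) := by
    rw [← add_sum_erase _ _ (mem_univ y)]
    refine add_le_of_nonpos_right (sum_nonpos fun z _ =>
      mul_nonpos_of_nonneg_of_nonpos (hp z) (log_nonpos (hq.1 z) ?_))
    exact single_le_sum (fun z _ => hq.1 z) (mem_univ z) |>.trans_eq hq.2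
  rw [klDivReal]; linarith

theorem tendsto_klDivReal_convexComb {p q r : Y → ℝ} (h : ∀ y, q y = 0 → p y = 0) :
    Tendsto (fun t : ℝ => klDivReal p ((1 - t) • q + t • r)) (𝓝[>] 0) (𝓝 (klDivReal p q)) := by
  have hcont : ∀ y, ContinuousAt (fun t : ℝ => p y * log ((1 - t) * q y + t * r y)) 0 := by
    intro y
    by_cases hy : p y = 0
    · simp only [hy, zero_mul]; exact continuousAt_const
    · have hlin : ContinuousAt (fun t : ℝ => (1 - t) * q y + t * r y) 0 := by fun_prop
      exact continuousAt_const.mul (hlin.log (by simpa using mt (h y) hy))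
  have hlim : Tendsto (fun t : ℝ => klDivReal p ((1 - t) • q + t • r)) (𝓝 0)
      (𝓝 (klDivReal p q)) := by
    simpa [klDivReal] using
      tendsto_const_nhds.sub (tendsto_finsetSum univ fun y _ => (hcont y).tendsto)
  exact hlim.mono_left nhdsWithin_le_nhds

theorem tendsto_klDivReal_convexComb_atTop {p q : Y → ℝ} (hp : p ∈ probSimplex Y)
    (hq : q ∈ probSimplex Y) {y : Y} (hqy : q y = 0) (hpy : p y ≠ 0) :
    Tendsto (fun t : ℝ => klDivReal p ((1 - t) • q + t • p)) (𝓝[>] 0) atTop := by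
  set c := ∑ z, p z * log (p z) - p y * log (p y)
  have hlow : ∀ t ∈ Set.Ioo (0 : ℝ) 1, c + -p y * log t ≤ klDivReal p ((1 - t) • q + t • p) := by
    intro t ht
    have hmem : (1 - t) • q + t • p ∈ probSimplex Y :=
      convex_stdSimplex ℝ Y hq hp (by linarith [ht.2]) ht.1.le (by ring)
    have := sum_mul_log_sub_mul_log_le_klDivReal hp.1 hmem y
    simp only [Pi.add_apply, Pi.smul_apply, smul_eq_mul, hqy, mul_zero, zero_add,
      log_mul ht.1.ne' hpy] at this
    linarith
  have hlog := tendsto_log_nhdsGT_zero.const_mul_atBot_of_neg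
    (neg_lt_zero.2 ((hp.1 y).lt_of_ne' hpy))
  exact tendsto_atTop_mono' _ (mem_of_superset (Ioo_mem_nhdsGT one_pos) hlow)
    (tendsto_atTop_add_const_left _ c hlog)

end Divergence

section Simplex

variable {X : Type} [Fintype X] {a : X → EReal}

theorem sum_coe_mul_le_iSup {p : X → ℝ} (hp : p ∈ probSimplex X) (ha : ∀ x, 0 ≤ a x) :
    ∑ x, (p x : EReal) * a x ≤ ⨆ x, a x := by
  obtain ⟨x₀, -, -⟩ := exists_ne_zero_of_sum_ne_zero (hp.2.trans_ne one_ne_zero)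
  set M := ⨆ x, a x
  by_cases hM : M = ⊤
  · exact hM ▸ le_top
  have hMbot : M ≠ ⊥ := ne_bot_of_le_ne_bot EReal.zero_ne_bot ((ha x₀).trans (le_iSup a x₀))
  calc ∑ x, (p x : EReal) * a x ≤ ∑ x, (p x : EReal) * M :=
        sum_le_sum fun x _ => mul_le_mul_of_nonneg_left (le_iSup a x) (EReal.coe_nonneg.2 (hp.1 x))
    _ = M := by
        rw [← EReal.coe_toReal hM hMbot]
        simp_rw [← EReal.coe_mul, ← EReal.coe_finset_sum, ← sum_mul, hp.2, one_mul]

theorem iSup_probSimplex_sum_coe_mul (ha : ∀ x, 0 ≤ a x) :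
    ⨆ p : probSimplex X, ∑ x, (p.1 x : EReal) * a x = ⨆ x, a x := by
  classical
  refine le_antisymm (iSup_le fun p => sum_coe_mul_le_iSup p.2 ha) (iSup_le fun x => ?_)
  refine le_iSup_of_le ⟨Pi.single x 1, single_mem_stdSimplex ℝ x⟩ ?_
  simp [Pi.single_apply, apply_ite Real.toEReal, ite_mul]

end Simplex

section Channel

variable {X Y : Type} [Fintype X] [Fintype Y] (P : X → Y → ℝ)

def outDist (p : X → ℝ) : Y → ℝ := fun y => ∑ x, p x * P x y

noncomputable def mutualInfo (p : X → ℝ) : ℝ :=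
  ∑ x, p x * klDivReal (P x) (outDist P p)

theorem sum_mul_klDivReal (p : X → ℝ) (q : Y → ℝ) :
    ∑ x, p x * klDivReal (P x) q
      = ∑ x, p x * ∑ y, P x y * log (P x y) - ∑ y, outDist P p y * log (q y) := by
  simp only [klDivReal, mul_sub, sum_sub_distrib, outDist, sum_mul, mul_sum, mul_assoc]
  rw [sum_comm (f := fun y x => p x * (P x y * log (q y)))]

theorem sum_mul_klDivReal_eq_mutualInfo_add (p : X → ℝ) (q : Y → ℝ) :
    ∑ x, p x * klDivReal (P x) q = mutualInfo P p + klDivReal (outDist P p) q := by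
  rw [mutualInfo, sum_mul_klDivReal, sum_mul_klDivReal, klDivReal]; ring

theorem continuous_mutualInfo : Continuous (mutualInfo P) := by
  have h : mutualInfo P = fun p => ∑ x, p x * ∑ y, P x y * log (P x y)
      - ∑ y, outDist P p y * log (outDist P p y) := funext fun p => sum_mul_klDivReal P p _
  have := continuous_mul_log
  rw [h]
  unfold outDist
  fun_prop

theorem exists_isMaxOn_mutualInfo [Nonempty X] :
    ∃ p ∈ probSimplex X, IsMaxOn (mutualInfo P) (probSimplex X) p := by
  classical
  exact (isCompact_stdSimplex ℝ X).exists_isMaxOn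
    ⟨_, single_mem_stdSimplex ℝ (Classical.arbitrary X)⟩ (continuous_mutualInfo P).continuousOn

variable {P} {p : X → ℝ}

theorem outDist_mem (hP : ∀ x, P x ∈ probSimplex Y) (hp : p ∈ probSimplex X) :
    outDist P p ∈ probSimplex Y := by
  refine ⟨fun y => sum_nonneg fun x _ => mul_nonneg (hp.1 x) ((hP x).1 y), ?_⟩
  simp only [outDist]
  rw [sum_comm]
  simp [← mul_sum, (hP _).2, hp.2]

theorem apply_eq_zero_of_outDist_eq_zero (hP : ∀ x, P x ∈ probSimplex Y)
    (hp : ∀ x, 0 ≤ p x) {x : X} {y : Y} (hx : p x ≠ 0) (hy : outDist P p y = 0) : P x y = 0 :=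
  ((mul_eq_zero.1 <| (sum_eq_zero_iff_of_nonneg fun x _ => mul_nonneg (hp x) ((hP x).1 y)).1
    hy x (mem_univ x))).resolve_left hx

theorem sum_coe_mul_klDiv (hP : ∀ x, P x ∈ probSimplex Y) {q : Y → ℝ}
    (hp : p ∈ probSimplex X) (hq : q ∈ probSimplex Y) :
    ∑ x, (p x : EReal) * klDiv (P x) q = mutualInfo P p + klDiv (outDist P p) q := by
  by_cases h : ∀ y, q y = 0 → outDist P p y = 0
  · have hterm : ∀ x, (p x : EReal) * klDiv (P x) q = (p x * klDivReal (P x) q : ℝ) := by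
      intro x
      by_cases hx : p x = 0
      · simp [hx]
      · rw [klDiv_eq_coe_klDivReal fun y hy =>
          apply_eq_zero_of_outDist_eq_zero hP hp.1 hx (h y hy), EReal.coe_mul]
    rw [sum_congr rfl fun x _ => hterm x, ← EReal.coe_finset_sum, klDiv_eq_coe_klDivReal h,
      sum_mul_klDivReal_eq_mutualInfo_add, EReal.coe_add]
  · push Not at h
    obtain ⟨y, hqy, hy⟩ := h
    obtain ⟨x, -, hx⟩ := exists_ne_zero_of_sum_ne_zero hy
    have hpx : 0 < p x := (hp.1 x).lt_of_ne' (left_ne_zero_of_mul hx)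
    rw [klDiv_eq_top hqy hy, EReal.coe_add_top, eq_top_iff]
    calc ⊤ = (p x : EReal) * klDiv (P x) q := by
          rw [klDiv_eq_top hqy (right_ne_zero_of_mul hx), EReal.coe_mul_top_of_pos hpx]
      _ ≤ ∑ x, (p x : EReal) * klDiv (P x) q :=
          single_le_sum (fun x _ => mul_nonneg (EReal.coe_nonneg.2 (hp.1 x))
            (klDiv_nonneg (hP x) hq)) (mem_univ x)

theorem eq_outDist_of_iSup_klDiv_le (hP : ∀ x, P x ∈ probSimplex Y) (hp : p ∈ probSimplex X)
    {q : Y → ℝ} (hq : q ∈ probSimplex Y) (h : ⨆ x, klDiv (P x) q ≤ mutualInfo P p) :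
    q = outDist P p := by
  by_contra hne
  have hlt := calc (mutualInfo P p : EReal)
      _ = mutualInfo P p + 0 := (add_zero _).symm
      _ < mutualInfo P p + klDiv (outDist P p) q :=
        EReal.add_lt_add_left_coe (klDiv_pos (outDist_mem hP hp) hq (Ne.symm hne)) _
      _ = ∑ x, (p x : EReal) * klDiv (P x) q := (sum_coe_mul_klDiv hP hp hq).symm
      _ ≤ ⨆ x, klDiv (P x) q := sum_coe_mul_le_iSup hp fun x => klDiv_nonneg (hP x) hq
  exact (hlt.trans_le h).false

theorem klDivReal_convexComb_le_mutualInfo (hP : ∀ x, P x ∈ probSimplex Y)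
    (hp : p ∈ probSimplex X) (hmax : IsMaxOn (mutualInfo P) (probSimplex X) p) (x₀ : X)
    {t : ℝ} (ht : t ∈ Set.Ioo (0 : ℝ) 1) :
    klDivReal (P x₀) ((1 - t) • outDist P p + t • P x₀) ≤ mutualInfo P p := by
  classical
  set pt : X → ℝ := (1 - t) • p + t • Pi.single x₀ 1
  set qt : Y → ℝ := (1 - t) • outDist P p + t • P x₀
  have hpt : pt ∈ probSimplex X :=
    convex_stdSimplex ℝ X hp (single_mem_stdSimplex ℝ x₀) (by linarith [ht.2]) ht.1.le (by ring)
  have hqt : outDist P pt = qt := by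
    ext y
    simp [pt, qt, outDist, add_mul, sum_add_distrib, mul_sum, mul_assoc, Pi.single_apply]
  have hsplit : mutualInfo P pt
      = (1 - t) * ∑ x, p x * klDivReal (P x) qt + t * klDivReal (P x₀) qt := by
    rw [mutualInfo, hqt]
    simp [pt, add_mul, sum_add_distrib, mul_sum, mul_assoc, Pi.single_apply]
  have hdom : ∀ y, qt y = 0 → outDist P p y = 0 := by
    intro y hy
    have h1 := mul_nonneg (sub_nonneg.2 ht.2.le) ((outDist_mem hP hp).1 y)
    have h2 := mul_nonneg ht.1.le ((hP x₀).1 y)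
    exact (mul_eq_zero.1 ((add_eq_zero_iff_of_nonneg h1 h2).1 hy).1).resolve_left
      (sub_ne_zero.2 ht.2.ne')
  have hgibbs : mutualInfo P p ≤ ∑ x, p x * klDivReal (P x) qt := by
    rw [sum_mul_klDivReal_eq_mutualInfo_add]
    linarith [klDivReal_nonneg (outDist_mem hP hp) (hqt ▸ outDist_mem hP hpt) hdom]
  have hmix : mutualInfo P pt ≤ mutualInfo P p := hmax hpt
  have hle : t * klDivReal (P x₀) qt ≤ t * mutualInfo P p := by
    linarith [mul_le_mul_of_nonneg_left hgibbs (sub_nonneg.2 ht.2.le)]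
  exact le_of_mul_le_mul_left hle ht.1

theorem klDiv_le_mutualInfo_of_isMaxOn (hP : ∀ x, P x ∈ probSimplex Y)
    (hp : p ∈ probSimplex X) (hmax : IsMaxOn (mutualInfo P) (probSimplex X) p) (x₀ : X) :
    klDiv (P x₀) (outDist P p) ≤ mutualInfo P p := by
  have hev : ∀ᶠ t in 𝓝[>] (0 : ℝ),
      klDivReal (P x₀) ((1 - t) • outDist P p + t • P x₀) ≤ mutualInfo P p :=
    mem_of_superset (Ioo_mem_nhdsGT one_pos) fun t ht =>
      klDivReal_convexComb_le_mutualInfo hP hp hmax x₀ ht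
  by_cases h : ∀ y, outDist P p y = 0 → P x₀ y = 0
  · rw [klDiv_eq_coe_klDivReal h]
    exact EReal.coe_le_coe_iff.2 (le_of_tendsto (tendsto_klDivReal_convexComb h) hev)
  · push Not at h
    obtain ⟨y, hy0, hy⟩ := h
    obtain ⟨t, hbig, hsmall⟩ :=
      (((tendsto_klDivReal_convexComb_atTop (hP x₀) (outDist_mem hP hp) hy0 hy).eventually_gt_atTop
        (mutualInfo P p)).and hev).exists
    exact absurd hsmall hbig.not_ge

end Channel

theorem capacity_saddle_point_general
    (X Y : Type) [Fintype X] [Fintype Y] [Nonempty X]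
    (P : X → Y → ℝ) (hP : ∀ x, P x ∈ probSimplex Y) :
    (⨆ pX : probSimplex X, ⨅ q : probSimplex Y,
        ∑ x, ((pX.1 x : EReal) * klDiv (P x) q.1)
      = ⨅ q : probSimplex Y, ⨆ pX : probSimplex X,
          ∑ x, ((pX.1 x : EReal) * klDiv (P x) q.1)) ∧
    (⨅ q : probSimplex Y, ⨆ pX : probSimplex X,
        ∑ x, ((pX.1 x : EReal) * klDiv (P x) q.1)
      = ⨅ q : probSimplex Y, ⨆ x : X, klDiv (P x) q.1) ∧
    ∃! q : probSimplex Y,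
      (⨆ x : X, klDiv (P x) q.1)
        = ⨅ q' : probSimplex Y, ⨆ x : X, klDiv (P x) q'.1 := by
  obtain ⟨p₀, hp₀, hmax⟩ := exists_isMaxOn_mutualInfo P
  set C := mutualInfo P p₀
  set q₀ : probSimplex Y := ⟨outDist P p₀, outDist_mem hP hp₀⟩
  have hsup : ∀ q : probSimplex Y, ⨆ pX : probSimplex X,
      ∑ x, (pX.1 x : EReal) * klDiv (P x) q.1 = ⨆ x, klDiv (P x) q.1 :=
    fun q => iSup_probSimplex_sum_coe_mul fun x => klDiv_nonneg (hP x) q.2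
  have hq₀ : ⨆ x, klDiv (P x) q₀.1 ≤ C := iSup_le (klDiv_le_mutualInfo_of_isMaxOn hP hp₀ hmax)
  have hC : (C : EReal) ≤ ⨆ pX : probSimplex X, ⨅ q : probSimplex Y,
      ∑ x, (pX.1 x : EReal) * klDiv (P x) q.1 := by
    refine le_iSup_of_le ⟨p₀, hp₀⟩ (le_iInf fun q => ?_)
    rw [sum_coe_mul_klDiv hP hp₀ q.2]
    exact le_add_of_nonneg_right (klDiv_nonneg (outDist_mem hP hp₀) q.2)
  have hweak := iSup_iInf_le_iInf_iSup fun (pX : probSimplex X) (q : probSimplex Y) =>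
    ∑ x, (pX.1 x : EReal) * klDiv (P x) q.1
  rw [iInf_congr hsup] at hweak ⊢
  have hinf : ⨅ q : probSimplex Y, ⨆ x, klDiv (P x) q.1 = C :=
    le_antisymm (iInf_le_of_le q₀ hq₀) (hC.trans hweak)
  refine ⟨le_antisymm hweak (hinf ▸ hC), rfl, q₀, hinf ▸ le_antisymm hq₀ (hinf ▸ iInf_le _ q₀),
    fun q hq => Subtype.ext (eq_outDist_of_iSup_klDiv_le hP hp₀ q.2 (hq.trans hinf).le)⟩

/-- Saddle-point characterization of channel capacity: for a channel `P_{Y|X}` with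
finite alphabets,
`sup_{P_X} inf_{Q_Y} D(P_{Y|X}‖Q_Y|P_X) = inf_{Q_Y} sup_{P_X} D(P_{Y|X}‖Q_Y|P_X)
 = inf_{Q_Y} sup_x D(P_{Y|X=x}‖Q_Y)`,
where `D(P_{Y|X}‖Q_Y|P_X) = Σ_x P_X(x) D(P_{Y|X=x}‖Q_Y)`; moreover the minimizing
output distribution `Q_Y` (the capacity-achieving output distribution) is unique. -/
theorem capacity_saddle_point
    (X Y : Type) [Fintype X] [Fintype Y] [Nonempty X] [Nonempty Y]
    (P : X → Y → ℝ) (hP : ∀ x, P x ∈ probSimplex Y) :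
    (⨆ pX : probSimplex X, ⨅ q : probSimplex Y,
        ∑ x, ((pX.1 x : EReal) * klDiv (P x) q.1)
      = ⨅ q : probSimplex Y, ⨆ pX : probSimplex X,
          ∑ x, ((pX.1 x : EReal) * klDiv (P x) q.1)) ∧
    (⨅ q : probSimplex Y, ⨆ pX : probSimplex X,
        ∑ x, ((pX.1 x : EReal) * klDiv (P x) q.1)
      = ⨅ q : probSimplex Y, ⨆ x : X, klDiv (P x) q.1) ∧
    ∃! q : probSimplex Y,
      (⨆ x : X, klDiv (P x) q.1)
        = ⨅ q' : probSimplex Y, ⨆ x : X, klDiv (P x) q'.1 :=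
  capacity_saddle_point_general X Y P hP
end
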